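/- arXiv:2510.27100 — 11 statements merged into one kernel-verified Lean document; each statement's English description precedes it below -/
import Mathlib

section
/- Let n ≥ 1 and let K ⊆ ℂⁿ be a nonempty compact set. Then Ĥ(K) = h(K); that is, a point z ∈ ℂⁿ satisfies ‖u(z)/v(z)‖ ≤ sup_{w ∈ K} ‖u(w)/v(w)‖ for all entire functions u, v with v nonvanishing on K ∪ {z}, if and only if every entire function vanishing at z has a zero on K. -/
open Set

/-- An *entire* function on `ℂⁿ`: complex analytic on all of `ℂⁿ`. -/
def Entire {n : ℕ} (f : (Fin n → ℂ) → ℂ) : Prop :=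
  AnalyticOnNhd ℂ f Set.univ

/-- The meromorphic hull `Ĥ(K)` of a compact set `K ⊆ ℂⁿ`: points `z` such that
`‖u(z)/v(z)‖ ≤ sup_{w ∈ K} ‖u(w)/v(w)‖` for all entire `u, v` with `v`
nonvanishing on `K ∪ {z}`. -/
def merHull {n : ℕ} (K : Set (Fin n → ℂ)) : Set (Fin n → ℂ) :=
  {z | ∀ u v : (Fin n → ℂ) → ℂ, Entire u → Entire v →
    (∀ x ∈ K ∪ {z}, v x ≠ 0) →
    ‖u z / v z‖ ≤ sSup ((fun w => ‖u w / v w‖) '' K)}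

/-- The hull `h(K)` of `K` with respect to complex hypersurfaces: points `z` such that
every entire function vanishing at `z` has a zero on `K`. -/
def hypHull {n : ℕ} (K : Set (Fin n → ℂ)) : Set (Fin n → ℂ) :=
  {z | ∀ f : (Fin n → ℂ) → ℂ, Entire f → f z = 0 → ∃ w ∈ K, f w = 0}

/-- On `ℂⁿ`, the meromorphic hull of a nonempty compact set coincides with its hull
with respect to complex hypersurfaces. -/
theorem merHull_eq_hypHull {n : ℕ} (hn : 1 ≤ n) (K : Set (Fin n → ℂ))
    (hK : IsCompact K) (hKne : K.Nonempty) :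
    merHull K = hypHull K := by
  ext z
  constructor
  · intro hz f hf hfz
    by_contra hno
    push_neg at hno
    -- f is nonvanishing on K; get positive minimum of ‖f‖ on K
    have hfc : ContinuousOn (fun x => ‖f x‖) K :=
      (hf.continuousOn.mono (subset_univ K)).norm
    obtain ⟨w₀, hw₀K, hmin⟩ := hK.exists_isMinOn hKne hfc
    set δ := ‖f w₀‖ with hδdef
    have hδpos : 0 < δ := norm_pos_iff.mpr (hno w₀ hw₀K)
    set v : (Fin n → ℂ) → ℂ := fun x => f x + ((δ/3 : ℝ) : ℂ) with hv
    have hvE : Entire v := hf.add analyticOnNhd_const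
    have hvK : ∀ x ∈ K, (2*δ/3 : ℝ) ≤ ‖v x‖ := by
      intro x hx
      have h1 : δ ≤ ‖f x‖ := hmin hx
      have h2 : ‖f x‖ ≤ ‖f x + ((δ/3 : ℝ) : ℂ)‖ + ‖((δ/3 : ℝ) : ℂ)‖ := by
        simpa using norm_sub_le (f x + ((δ/3 : ℝ) : ℂ)) ((δ/3 : ℝ) : ℂ)
      have h3 : ‖((δ/3 : ℝ) : ℂ)‖ = δ/3 := by
        rw [Complex.norm_real, Real.norm_eq_abs, abs_of_pos (by linarith)]
      simp only [hv]
      linarith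
    have hvne : ∀ x ∈ K ∪ {z}, v x ≠ 0 := by
      intro x hx
      rcases hx with hx | hx
      · intro h0
        have := hvK x hx
        rw [h0, norm_zero] at this
        linarith
      · rcases hx with rfl
        simp only [hv, hfz, zero_add]
        exact_mod_cast (by positivity : (δ/3 : ℝ) ≠ 0)
    have key := hz (fun _ => (1 : ℂ)) v analyticOnNhd_const hvE hvne
    -- bound the sup
    have hsup : sSup ((fun w => ‖(1:ℂ) / v w‖) '' K) ≤ 3/(2*δ) := by
      apply Real.sSup_le
      · rintro y ⟨x, hx, rfl⟩
        show ‖(1:ℂ) / v x‖ ≤ 3/(2*δ)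
        rw [norm_div, norm_one]
        rw [div_le_div_iff₀ (lt_of_lt_of_le (by positivity) (hvK x hx)) (by positivity)]
        have := hvK x hx
        nlinarith
      · positivity
    have hvz : v z = ((δ/3 : ℝ) : ℂ) := by simp [hv, hfz]
    have hzval : ‖(1:ℂ) / v z‖ = 3/δ := by
      rw [hvz, norm_div, norm_one, Complex.norm_real, Real.norm_eq_abs, abs_of_pos (by positivity)]
      rw [one_div, div_eq_mul_inv]
      field_simp
    rw [hzval] at key
    have : (3:ℝ)/δ ≤ 3/(2*δ) := le_trans key hsup
    rw [div_le_div_iff₀ (by positivity) (by positivity)] at this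
    nlinarith
  · intro hz u v hu hv hvne
    by_contra hlt
    push_neg at hlt
    set M := sSup ((fun w => ‖u w / v w‖) '' K) with hM
    set c := u z / v z with hc
    set f : (Fin n → ℂ) → ℂ := fun x => u x - c * v x with hf
    have hfE : Entire f := hu.sub (analyticOnNhd_const.mul hv)
    have hfz : f z = 0 := by
      simp only [hf, hc]
      rw [div_mul_cancel₀ _ (hvne z (Or.inr rfl)), sub_self]
    obtain ⟨w, hwK, hfw⟩ := hz f hfE hfz
    have hvw : v w ≠ 0 := hvne w (Or.inl hwK)
    have huw : u w / v w = c := by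
      have : u w = c * v w := sub_eq_zero.mp (by simpa [hf] using hfw)
      rw [this, mul_div_assoc, div_self hvw, mul_one]
    have hbdd : BddAbove ((fun w => ‖u w / v w‖) '' K) := by
      apply (hK.image_of_continuousOn _).bddAbove
      exact ((hu.continuousOn.mono (subset_univ K)).div
        (hv.continuousOn.mono (subset_univ K)) (fun x hx => hvne x (Or.inl hx))).norm
    have hle : ‖u w / v w‖ ≤ M := le_csSup hbdd ⟨w, hwK, rfl⟩
    rw [huw] at hle
    exact absurd hle (not_le.mpr hlt)
end

section
/- Let n ≥ 1 and let K ⊆ ℂⁿ be a nonempty compact set. Then the meromorphic hull of K equals its rational hull: Ĥ(K) = R(K). -/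
open Set

/-- The rational hull `R(K)` of a compact set `K ⊆ ℂⁿ`: points `z` such that
`‖p(z)/q(z)‖ ≤ sup_{w ∈ K} ‖p(w)/q(w)‖` for all polynomials `p, q` with `q`
nonvanishing on `K ∪ {z}`. -/
def ratHull {n : ℕ} (K : Set (Fin n → ℂ)) : Set (Fin n → ℂ) :=
  {z | ∀ p q : MvPolynomial (Fin n) ℂ,
    (∀ x ∈ K ∪ {z}, MvPolynomial.eval x q ≠ 0) →
    ‖MvPolynomial.eval z p / MvPolynomial.eval z q‖ ≤
      sSup ((fun w => ‖MvPolynomial.eval w p / MvPolynomial.eval w q‖) '' K)}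

namespace MerRatAux


open Metric Real MvPolynomial

variable {n : ℕ}

lemma entire_continuous {f : (Fin n → ℂ) → ℂ} (hf : Entire f) : Continuous f :=
  AnalyticOnNhd.continuous hf

noncomputable def D (f : (Fin (n + 1) → ℂ) → ℂ) : (Fin (n + 1) → ℂ) → ℂ :=
  fun x => fderiv ℂ f x (Fin.cons 1 0)

lemma entire_D {f : (Fin (n + 1) → ℂ) → ℂ} (hf : Entire f) : Entire (MerRatAux.D f) := by
  have h1 : AnalyticOnNhd ℂ (fderiv ℂ f) Set.univ := hf.fderiv
  exact (ContinuousLinearMap.apply ℂ ℂ (Fin.cons 1 0 : Fin (n+1) → ℂ)).comp_analyticOnNhd h1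

lemma cons_eq (z : ℂ) (w : Fin n → ℂ) :
    (Fin.cons z w : Fin (n+1) → ℂ)
      = Fin.cons 0 w + z • (Fin.cons 1 0 : Fin (n+1) → ℂ) := by
  funext i
  refine Fin.cases ?_ (fun j => ?_) i <;> simp

lemma entire_diff {f : (Fin (n+1) → ℂ) → ℂ} (hf : Entire f) : Differentiable ℂ f :=
  fun x => (hf x (Set.mem_univ x)).differentiableAt

lemma slice_diff {f : (Fin (n+1) → ℂ) → ℂ} (hf : Entire f) (w : Fin n → ℂ) :
    Differentiable ℂ (fun z : ℂ => f (Fin.cons z w)) := by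
  have h2 : Differentiable ℂ (fun z : ℂ => (Fin.cons z w : Fin (n+1) → ℂ)) := by
    have : (fun z : ℂ => (Fin.cons z w : Fin (n+1) → ℂ))
        = fun z : ℂ => Fin.cons 0 w + z • (Fin.cons 1 0 : Fin (n+1) → ℂ) := by
      funext z; exact cons_eq z w
    rw [this]
    exact ((differentiable_id.smul_const _)).const_add _
  exact (entire_diff hf).comp h2

lemma deriv_slice {f : (Fin (n+1) → ℂ) → ℂ} (hf : Entire f) (w : Fin n → ℂ) :
    deriv (fun z : ℂ => f (Fin.cons z w)) = fun z : ℂ => MerRatAux.D f (Fin.cons z w) := by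
  funext z
  have h1 : HasDerivAt (fun z : ℂ => (Fin.cons 0 w : Fin (n+1) → ℂ)
      + z • (Fin.cons 1 0 : Fin (n+1) → ℂ)) (Fin.cons 1 0 : Fin (n+1) → ℂ) z := by
    simpa using ((hasDerivAt_id z).smul_const (Fin.cons 1 0 : Fin (n+1) → ℂ)).const_add
      (Fin.cons 0 w : Fin (n+1) → ℂ)
  have h1' : HasDerivAt (fun z : ℂ => (Fin.cons z w : Fin (n+1) → ℂ))
      (Fin.cons 1 0 : Fin (n+1) → ℂ) z := by
    have : (fun z : ℂ => (Fin.cons z w : Fin (n+1) → ℂ))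
        = fun z : ℂ => Fin.cons 0 w + z • (Fin.cons 1 0 : Fin (n+1) → ℂ) := by
      funext z; exact cons_eq z w
    rw [this]; exact h1
  have h2 : HasDerivAt (fun z : ℂ => f (Fin.cons z w))
      (fderiv ℂ f (Fin.cons z w) (Fin.cons 1 0 : Fin (n+1) → ℂ)) z :=
    ((entire_diff hf (Fin.cons z w)).hasFDerivAt).comp_hasDerivAt z h1'
  exact h2.deriv

lemma iter_entire {f : (Fin (n+1) → ℂ) → ℂ} (hf : Entire f) (k : ℕ) :
    Entire (MerRatAux.D^[k] f) := by
  induction k with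
  | zero => exact hf
  | succ k ih => rw [Function.iterate_succ_apply']; exact entire_D ih

lemma iteratedDeriv_slice {f : (Fin (n+1) → ℂ) → ℂ} (k : ℕ) (hf : Entire f)
    (w : Fin n → ℂ) (z : ℂ) :
    iteratedDeriv k (fun z : ℂ => f (Fin.cons z w)) z = (MerRatAux.D^[k] f) (Fin.cons z w) := by
  induction k generalizing f with
  | zero => simp
  | succ k ih =>
      rw [iteratedDeriv_succ', deriv_slice hf w, Function.iterate_succ_apply]
      exact ih (entire_D hf)

lemma coeff_bound {h : ℂ → ℂ} (hd : Differentiable ℂ h) {R : NNReal} {M : ℝ} (hR : 0 < R)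
    (hM : ∀ θ : ℝ, ‖h (circleMap 0 R θ)‖ ≤ M) (k : ℕ) :
    (k.factorial : ℝ)⁻¹ * ‖iteratedDeriv k h 0‖ ≤ M * ((R : ℝ)⁻¹) ^ k := by
  have hp := hd.hasFPowerSeriesOnBall 0 hR
  have h1 : (k.factorial : ℕ) • (cauchyPowerSeries h 0 R k fun _ => (1:ℂ))
      = iteratedFDeriv ℂ k h 0 fun _ => 1 := hp.factorial_smul (y := (1:ℂ)) k
  have h2 : iteratedDeriv k h 0 = iteratedFDeriv ℂ k h 0 fun _ => 1 :=
    iteratedDeriv_eq_iteratedFDeriv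
  have h3 : ‖iteratedDeriv k h 0‖
      = (k.factorial : ℝ) * ‖cauchyPowerSeries h 0 R k fun _ => (1:ℂ)‖ := by
    rw [h2, ← h1, nsmul_eq_mul]
    simp [norm_mul]
  have h4 : ‖cauchyPowerSeries h 0 R k fun _ => (1:ℂ)‖ ≤ ‖cauchyPowerSeries h 0 R k‖ := by
    simpa using (cauchyPowerSeries h 0 R k).le_opNorm fun _ => (1:ℂ)
  have h5 := norm_cauchyPowerSeries_le h 0 R k
  have hM0 : 0 ≤ M := le_trans (norm_nonneg _) (hM 0)
  have h6 : (∫ θ in (0:ℝ)..2 * π, ‖h (circleMap 0 R θ)‖) ≤ 2 * π * M := by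
    have hInt : IntervalIntegrable (fun θ : ℝ => ‖h (circleMap 0 R θ)‖)
        MeasureTheory.volume 0 (2 * π) :=
      (hd.continuous.comp (continuous_circleMap 0 R)).norm.intervalIntegrable _ _
    calc (∫ θ in (0:ℝ)..2 * π, ‖h (circleMap 0 R θ)‖)
        ≤ ∫ _ in (0:ℝ)..2 * π, M := by
          apply intervalIntegral.integral_mono_on two_pi_pos.le hInt
            (intervalIntegrable_const) fun θ _ => hM θ
      _ = 2 * π * M := by simp [mul_comm]
  have h7 : ‖cauchyPowerSeries h 0 R k‖ ≤ M * ((R : ℝ)⁻¹) ^ k := by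
    refine le_trans h5 ?_
    have habs : |(R : ℝ)| = (R : ℝ) := abs_of_nonneg R.coe_nonneg
    rw [habs]
    apply mul_le_mul_of_nonneg_right _ (by positivity)
    calc (2 * π)⁻¹ * ∫ θ in (0:ℝ)..2 * π, ‖h (circleMap 0 R θ)‖
        ≤ (2 * π)⁻¹ * (2 * π * M) := by
          apply mul_le_mul_of_nonneg_left h6 (by positivity)
      _ = M := by field_simp
  calc (k.factorial : ℝ)⁻¹ * ‖iteratedDeriv k h 0‖
      = ‖cauchyPowerSeries h 0 R k fun _ => (1:ℂ)‖ := by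
        rw [h3, ← mul_assoc, inv_mul_cancel₀ (by positivity), one_mul]
    _ ≤ ‖cauchyPowerSeries h 0 R k‖ := h4
    _ ≤ M * ((R : ℝ)⁻¹) ^ k := h7

theorem approx : ∀ (N : ℕ) (f : (Fin N → ℂ) → ℂ), Entire f →
    ∀ C : Set (Fin N → ℂ), IsCompact C → ∀ ε : ℝ, 0 < ε →
    ∃ p : MvPolynomial (Fin N) ℂ, ∀ x ∈ C, ‖f x - MvPolynomial.eval x p‖ ≤ ε := by
  intro N
  induction N with
  | zero =>
      intro f hf C hC ε hε
      refine ⟨MvPolynomial.C (f (fun i => i.elim0)), fun x hx => ?_⟩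
      have hx0 : x = fun i => i.elim0 := funext fun i => i.elim0
      rw [hx0]
      simp [hε.le]
  | succ n IH =>
      intro f hf C hC ε hε
      obtain ⟨r, hr0, hrC⟩ := hC.isBounded.subset_closedBall_lt 0 0
      set R : NNReal := ⟨2 * (r + 1), by positivity⟩ with hRdef
      have hRr : (R : ℝ) = 2 * (r + 1) := rfl
      have hRpos : 0 < R := by
        rw [← NNReal.coe_lt_coe, hRr]; positivity
      obtain ⟨M, hM⟩ := (isCompact_closedBall (0 : Fin (n+1) → ℂ) R).exists_bound_of_continuousOn
        (entire_continuous hf).continuousOn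
      have hM0 : 0 ≤ M := le_trans (norm_nonneg _)
        (hM 0 (mem_closedBall_self (by positivity)))
      set g : ℕ → (Fin n → ℂ) → ℂ :=
        fun k w => ((k.factorial : ℂ))⁻¹ * (MerRatAux.D^[k] f) (Fin.cons 0 w) with hgdef
      -- entirety of coefficients
      have hg_entire : ∀ k, Entire (g k) := by
        intro k
        have hLana : AnalyticOnNhd ℂ
            (fun w : Fin n → ℂ => (Fin.cons 0 w : Fin (n+1) → ℂ)) Set.univ := by
          let L : (Fin n → ℂ) →L[ℂ] (Fin (n+1) → ℂ) :=
            ContinuousLinearMap.pi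
              (Fin.cases 0 (fun j => ContinuousLinearMap.proj j))
          have hLeq : (fun w : Fin n → ℂ => (Fin.cons 0 w : Fin (n+1) → ℂ)) = fun w => L w := by
            funext w
            funext i
            refine Fin.cases ?_ (fun j => ?_) i <;>
              simp [L, ContinuousLinearMap.pi_apply]
          rw [hLeq]
          exact L.analyticOnNhd _
        have hcomp : AnalyticOnNhd ℂ
            ((MerRatAux.D^[k] f) ∘ (fun w : Fin n → ℂ => (Fin.cons 0 w : Fin (n+1) → ℂ)))
            Set.univ :=
          (iter_entire hf k).comp hLana (Set.mapsTo_univ _ _)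
        exact analyticOnNhd_const.mul hcomp
      -- coefficient bounds
      have hcons_mem : ∀ (θ : ℝ) (w : Fin n → ℂ), w ∈ closedBall 0 r →
          (Fin.cons (circleMap 0 R θ) w : Fin (n+1) → ℂ) ∈ closedBall 0 (R : ℝ) := by
        intro θ w hw
        rw [mem_closedBall_zero_iff, pi_norm_le_iff_of_nonneg R.coe_nonneg]
        intro i
        refine Fin.cases ?_ (fun j => ?_) i
        · simp only [Fin.cons_zero]
          rw [norm_circleMap_zero, abs_of_nonneg R.coe_nonneg]
        · simp only [Fin.cons_succ]
          calc ‖w j‖ ≤ ‖w‖ := norm_le_pi_norm w j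
            _ ≤ r := mem_closedBall_zero_iff.mp hw
            _ ≤ (R : ℝ) := by rw [hRr]; linarith
      have hgb : ∀ k, ∀ w ∈ closedBall (0 : Fin n → ℂ) r,
          ‖g k w‖ ≤ M * ((R : ℝ)⁻¹) ^ k := by
        intro k w hw
        have hd := slice_diff hf w
        have hMθ : ∀ θ : ℝ, ‖(fun z : ℂ => f (Fin.cons z w)) (circleMap 0 R θ)‖ ≤ M :=
          fun θ => hM _ (hcons_mem θ w hw)
        have hb := coeff_bound hd hRpos hMθ k
        have heq : ‖g k w‖ = (k.factorial : ℝ)⁻¹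
            * ‖iteratedDeriv k (fun z : ℂ => f (Fin.cons z w)) 0‖ := by
          rw [hgdef]
          simp only [iteratedDeriv_slice k hf w 0, norm_mul, norm_inv]
          norm_num
        rw [heq]
        exact hb
      -- the Taylor expansion in the first variable
      have hsum : ∀ x : Fin (n+1) → ℂ,
          HasSum (fun k => g k (Fin.tail x) * (x 0) ^ k) (f x) := by
        intro x
        have h1 := Complex.hasSum_taylorSeries_of_entire
          (slice_diff hf (Fin.tail x)) 0 (x 0)
        have h2 : (fun k : ℕ => ((k.factorial : ℂ))⁻¹ • (x 0 - 0) ^ k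
            • iteratedDeriv k (fun z : ℂ => f (Fin.cons z (Fin.tail x))) 0)
            = fun k => g k (Fin.tail x) * (x 0) ^ k := by
          funext k
          rw [iteratedDeriv_slice k hf (Fin.tail x) 0]
          simp only [hgdef, smul_eq_mul, sub_zero]
          ring
        rw [h2] at h1
        rwa [Fin.cons_self_tail] at h1
      -- choose the truncation order
      obtain ⟨N, hN⟩ := exists_pow_lt_of_lt_one
        (show (0:ℝ) < ε / (4 * (M + 1)) by positivity) (by norm_num : (1/2 : ℝ) < 1)
      have hhalf : (r : ℝ) / (R : ℝ) ≤ 1 / 2 := by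
        rw [hRr, div_le_div_iff₀ (by positivity) (by norm_num)]
        linarith
      -- tail bound
      have htail : ∀ x ∈ C,
          ‖f x - ∑ k ∈ Finset.range N, g k (Fin.tail x) * (x 0) ^ k‖ ≤ ε / 2 := by
        intro x hx
        have hxr : ‖x‖ ≤ r := mem_closedBall_zero_iff.mp (hrC hx)
        have hx0 : ‖x 0‖ ≤ r := le_trans (norm_le_pi_norm x 0) hxr
        have hxt : Fin.tail x ∈ closedBall (0 : Fin n → ℂ) r := by
          rw [mem_closedBall_zero_iff, pi_norm_le_iff_of_nonneg hr0.le]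
          intro j
          exact le_trans (norm_le_pi_norm x j.succ) hxr
        have hbnd : ∀ k : ℕ, ‖g k (Fin.tail x) * (x 0) ^ k‖ ≤ M * (1/2 : ℝ) ^ k := by
          intro k
          rw [norm_mul, norm_pow]
          calc ‖g k (Fin.tail x)‖ * ‖x 0‖ ^ k
              ≤ (M * ((R : ℝ)⁻¹) ^ k) * r ^ k := by
                apply mul_le_mul (hgb k _ hxt) (pow_le_pow_left₀ (norm_nonneg _) hx0 k)
                  (by positivity) (by positivity)
            _ = M * ((r / (R : ℝ)) ^ k) := by
                rw [div_pow]; ring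
            _ ≤ M * (1/2 : ℝ) ^ k := by
                apply mul_le_mul_of_nonneg_left _ hM0
                exact pow_le_pow_left₀ (by positivity) hhalf k
        have hs := hsum x
        have hsm := hs.summable
        have hsplit := Summable.sum_add_tsum_nat_add N hsm
        rw [hs.tsum_eq] at hsplit
        have heq : f x - ∑ k ∈ Finset.range N, g k (Fin.tail x) * (x 0) ^ k
            = ∑' i : ℕ, g (i + N) (Fin.tail x) * (x 0) ^ (i + N) := by
          rw [← hsplit]; ring
        rw [heq]
        have hgeo : HasSum (fun i : ℕ => (M * (1/2 : ℝ) ^ N) * (1/2 : ℝ) ^ i)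
            ((M * (1/2 : ℝ) ^ N) * 2) := by
          have := hasSum_geometric_of_lt_one (show (0:ℝ) ≤ 1/2 by norm_num)
            (by norm_num : (1/2 : ℝ) < 1)
          have h2 : ((1 : ℝ) - 1/2)⁻¹ = 2 := by norm_num
          rw [h2] at this
          exact this.mul_left _
        have hbnd' : ∀ i : ℕ, ‖g (i + N) (Fin.tail x) * (x 0) ^ (i + N)‖
            ≤ (M * (1/2 : ℝ) ^ N) * (1/2 : ℝ) ^ i := by
          intro i
          calc ‖g (i + N) (Fin.tail x) * (x 0) ^ (i + N)‖
              ≤ M * (1/2 : ℝ) ^ (i + N) := hbnd (i + N)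
            _ = (M * (1/2 : ℝ) ^ N) * (1/2 : ℝ) ^ i := by rw [pow_add]; ring
        have := tsum_of_norm_bounded hgeo hbnd'
        refine le_trans this ?_
        have hN' : (1/2 : ℝ) ^ N * (4 * (M + 1)) ≤ ε := by
          rw [← le_div_iff₀ (by positivity)]
          exact hN.le
        nlinarith [pow_pos (show (0:ℝ) < 1/2 by norm_num) N]
      -- approximate the coefficients
      set δ : ℝ := ε / (2 * (N + 1) * (r + 1) ^ N) with hδdef
      have hδ0 : 0 < δ := by positivity
      choose q hq using fun k : Fin N =>
        IH (g k) (hg_entire k) (closedBall 0 r) (isCompact_closedBall _ _) δ hδ0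
      refine ⟨∑ k : Fin N, rename Fin.succ (q k) * X 0 ^ (k : ℕ), fun x hx => ?_⟩
      have hxr : ‖x‖ ≤ r := mem_closedBall_zero_iff.mp (hrC hx)
      have hx0 : ‖x 0‖ ≤ r := le_trans (norm_le_pi_norm x 0) hxr
      have hxt : Fin.tail x ∈ closedBall (0 : Fin n → ℂ) r := by
        rw [mem_closedBall_zero_iff, pi_norm_le_iff_of_nonneg hr0.le]
        intro j
        exact le_trans (norm_le_pi_norm x j.succ) hxr
      have heval : MvPolynomial.eval x (∑ k : Fin N, rename Fin.succ (q k) * X 0 ^ (k : ℕ))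
          = ∑ k : Fin N, MvPolynomial.eval (Fin.tail x) (q k) * (x 0) ^ (k : ℕ) := by
        rw [map_sum]
        congr 1
        funext k
        rw [map_mul, map_pow, eval_X, eval_rename]
        rfl
      have hr1 : ∀ k : Fin N, (r : ℝ) ^ (k : ℕ) ≤ (r + 1) ^ N := by
        intro k
        calc (r : ℝ) ^ (k : ℕ) ≤ (r + 1) ^ (k : ℕ) :=
            pow_le_pow_left₀ hr0.le (by linarith) _
          _ ≤ (r + 1) ^ N := pow_le_pow_right₀ (by linarith) k.isLt.le
      have hterm : ∀ k : Fin N,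
          ‖(g (k : ℕ) (Fin.tail x) - MvPolynomial.eval (Fin.tail x) (q k)) * (x 0) ^ (k : ℕ)‖
          ≤ δ * (r + 1) ^ N := by
        intro k
        rw [norm_mul, norm_pow]
        calc ‖g (k : ℕ) (Fin.tail x) - MvPolynomial.eval (Fin.tail x) (q k)‖ * ‖x 0‖ ^ (k : ℕ)
            ≤ δ * r ^ (k : ℕ) :=
              mul_le_mul (hq k _ hxt) (pow_le_pow_left₀ (norm_nonneg _) hx0 _)
                (by positivity) hδ0.le
          _ ≤ δ * (r + 1) ^ N := mul_le_mul_of_nonneg_left (hr1 k) hδ0.le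
      have hsum2 : ‖∑ k ∈ Finset.range N, g k (Fin.tail x) * (x 0) ^ k
          - ∑ k : Fin N, MvPolynomial.eval (Fin.tail x) (q k) * (x 0) ^ (k : ℕ)‖ ≤ ε / 2 := by
        rw [Finset.sum_range fun k => g k (Fin.tail x) * (x 0) ^ k, ← Finset.sum_sub_distrib]
        have h1 : ∀ k : Fin N, g (k : ℕ) (Fin.tail x) * (x 0) ^ (k : ℕ)
            - MvPolynomial.eval (Fin.tail x) (q k) * (x 0) ^ (k : ℕ)
            = (g (k : ℕ) (Fin.tail x) - MvPolynomial.eval (Fin.tail x) (q k))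
              * (x 0) ^ (k : ℕ) := by
          intro k; ring
        calc ‖∑ k : Fin N, (g (k : ℕ) (Fin.tail x) * (x 0) ^ (k : ℕ)
              - MvPolynomial.eval (Fin.tail x) (q k) * (x 0) ^ (k : ℕ))‖
            ≤ ∑ k : Fin N, ‖g (k : ℕ) (Fin.tail x) * (x 0) ^ (k : ℕ)
              - MvPolynomial.eval (Fin.tail x) (q k) * (x 0) ^ (k : ℕ)‖ :=
              norm_sum_le _ _
          _ ≤ ∑ _k : Fin N, δ * (r + 1) ^ N := by
              apply Finset.sum_le_sum
              intro k _
              rw [h1 k]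
              exact hterm k
          _ = (N : ℝ) * (δ * (r + 1) ^ N) := by
              rw [Finset.sum_const, Finset.card_univ, Fintype.card_fin, nsmul_eq_mul]
          _ ≤ ε / 2 := by
              have hpow : (0:ℝ) < (r + 1) ^ N := by positivity
              have hδval : δ * (r + 1) ^ N = ε / (2 * (N + 1)) := by
                rw [hδdef]
                field_simp
              rw [hδval]
              have hNf : (N : ℝ) / (2 * (N + 1)) ≤ 1 / 2 := by
                rw [div_le_div_iff₀ (by positivity) (by norm_num)]
                have : (0:ℝ) ≤ (N : ℝ) := Nat.cast_nonneg N
                linarith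
              calc (N : ℝ) * (ε / (2 * (N + 1))) = ε * ((N : ℝ) / (2 * (N + 1))) := by ring
                _ ≤ ε * (1 / 2) := mul_le_mul_of_nonneg_left hNf hε.le
                _ = ε / 2 := by ring
      calc ‖f x - MvPolynomial.eval x (∑ k : Fin N, rename Fin.succ (q k) * X 0 ^ (k : ℕ))‖
          = ‖(f x - ∑ k ∈ Finset.range N, g k (Fin.tail x) * (x 0) ^ k)
            + (∑ k ∈ Finset.range N, g k (Fin.tail x) * (x 0) ^ k
              - ∑ k : Fin N, MvPolynomial.eval (Fin.tail x) (q k) * (x 0) ^ (k : ℕ))‖ := by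
            rw [heval]; congr 1; ring
        _ ≤ ‖f x - ∑ k ∈ Finset.range N, g k (Fin.tail x) * (x 0) ^ k‖
            + ‖∑ k ∈ Finset.range N, g k (Fin.tail x) * (x 0) ^ k
              - ∑ k : Fin N, MvPolynomial.eval (Fin.tail x) (q k) * (x 0) ^ (k : ℕ)‖ :=
            norm_add_le _ _
        _ ≤ ε / 2 + ε / 2 := add_le_add (htail x hx) hsum2
        _ = ε := by ring

lemma entire_eval {n : ℕ} (p : MvPolynomial (Fin n) ℂ) :
    Entire (fun x => MvPolynomial.eval x p) := by
  induction p using MvPolynomial.induction_on with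
  | C a => simpa [Entire] using analyticOnNhd_const
  | add p q hp hq => simpa [Entire, Pi.add_def] using hp.add hq
  | mul_X p i hp =>
      have hX : Entire (fun x : Fin n → ℂ => x i) :=
        (ContinuousLinearMap.proj i : ((Fin n → ℂ) →L[ℂ] ℂ)).analyticOnNhd _
      simpa [Entire] using hp.mul hX


end MerRatAux

/-- On `ℂⁿ`, the meromorphic hull of a nonempty compact set equals its rational hull. -/
theorem merHull_eq_ratHull {n : ℕ} (hn : 1 ≤ n) (K : Set (Fin n → ℂ))
    (hK : IsCompact K) (hKne : K.Nonempty) :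
    merHull K = ratHull K := by
  apply Set.Subset.antisymm
  · intro z hz p q hq
    exact hz (fun x => MvPolynomial.eval x p) (fun x => MvPolynomial.eval x q)
      (MerRatAux.entire_eval p) (MerRatAux.entire_eval q) hq
  · intro z hz u v hu hv hv0
    set C : Set (Fin n → ℂ) := K ∪ {z} with hCdef
    have hC : IsCompact C := hK.union isCompact_singleton
    have hzC : z ∈ C := Or.inr rfl
    have hKC : K ⊆ C := Set.subset_union_left
    have hu' : Continuous u := MerRatAux.entire_continuous hu
    have hv' : Continuous v := MerRatAux.entire_continuous hv
    -- minimum of ‖v‖ on C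
    obtain ⟨x₀, hx₀C, hx₀⟩ := hC.exists_isMinOn ⟨z, hzC⟩ hv'.norm.continuousOn
    set m : ℝ := ‖v x₀‖ with hmdef
    have hm : 0 < m := norm_pos_iff.mpr (hv0 x₀ hx₀C)
    have hmle : ∀ x ∈ C, m ≤ ‖v x‖ := fun x hx => hx₀ hx
    -- bounds for u, v on C
    obtain ⟨Mu, hMu⟩ := hC.exists_bound_of_continuousOn hu'.continuousOn
    obtain ⟨Mv, hMv⟩ := hC.exists_bound_of_continuousOn hv'.continuousOn
    have hMu0 : 0 ≤ Mu := le_trans (norm_nonneg _) (hMu z hzC)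
    have hMv0 : 0 ≤ Mv := le_trans (norm_nonneg _) (hMv z hzC)
    set S : ℝ := sSup ((fun w => ‖u w / v w‖) '' K) with hSdef
    have hbdd : BddAbove ((fun w => ‖u w / v w‖) '' K) := by
      apply (hK.image_of_continuousOn _).bddAbove
      exact ((hu'.continuousOn.div hv'.continuousOn fun x hx => hv0 x (hKC hx))).norm
    have hSle : ∀ w ∈ K, ‖u w / v w‖ ≤ S := fun w hw => le_csSup hbdd ⟨w, hw, rfl⟩
    refine le_of_forall_pos_le_add fun ε hε => ?_
    -- choose δ
    set δ : ℝ := min (m / 2) (ε * (m * m) / (4 * (Mu + Mv + 1))) with hδdef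
    have hδ0 : 0 < δ := by
      apply lt_min (by positivity)
      positivity
    obtain ⟨P, hP⟩ := MerRatAux.approx n u hu C hC δ hδ0
    obtain ⟨Q, hQ⟩ := MerRatAux.approx n v hv C hC δ hδ0
    have hQlb : ∀ x ∈ C, m / 2 ≤ ‖MvPolynomial.eval x Q‖ := by
      intro x hx
      have h1 : ‖v x‖ - ‖v x - MvPolynomial.eval x Q‖ ≤ ‖MvPolynomial.eval x Q‖ := by
        have := norm_sub_norm_le (v x) (v x - MvPolynomial.eval x Q)
        simpa using this
      have := hQ x hx
      have := hmle x hx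
      have hδm : δ ≤ m / 2 := min_le_left _ _
      linarith
    have hQ0 : ∀ x ∈ C, MvPolynomial.eval x Q ≠ 0 := by
      intro x hx
      have := hQlb x hx
      intro h
      rw [h, norm_zero] at this
      linarith
    -- key estimate
    have key : ∀ x ∈ C,
        ‖MvPolynomial.eval x P / MvPolynomial.eval x Q - u x / v x‖ ≤ ε / 2 := by
      intro x hx
      have hvx : v x ≠ 0 := hv0 x hx
      have hQx : MvPolynomial.eval x Q ≠ 0 := hQ0 x hx
      rw [div_sub_div _ _ hQx hvx, norm_div]
      have hnum : ‖MvPolynomial.eval x P * v x - MvPolynomial.eval x Q * u x‖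
          ≤ δ * (Mu + Mv) := by
        have heq : MvPolynomial.eval x P * v x - MvPolynomial.eval x Q * u x
            = (MvPolynomial.eval x P - u x) * v x + u x * (v x - MvPolynomial.eval x Q) := by
          ring
        rw [heq]
        calc ‖(MvPolynomial.eval x P - u x) * v x + u x * (v x - MvPolynomial.eval x Q)‖
            ≤ ‖(MvPolynomial.eval x P - u x) * v x‖ + ‖u x * (v x - MvPolynomial.eval x Q)‖ :=
              norm_add_le _ _
          _ = ‖MvPolynomial.eval x P - u x‖ * ‖v x‖ + ‖u x‖ * ‖v x - MvPolynomial.eval x Q‖ := by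
              rw [norm_mul, norm_mul]
          _ ≤ δ * Mv + Mu * δ := by
              have h1 : ‖MvPolynomial.eval x P - u x‖ ≤ δ := by
                have := hP x hx; rwa [norm_sub_rev] at this
              have h2 : ‖v x - MvPolynomial.eval x Q‖ ≤ δ := hQ x hx
              have := hMu x hx
              have := hMv x hx
              apply add_le_add
              · exact mul_le_mul h1 (hMv x hx) (norm_nonneg _) hδ0.le
              · exact mul_le_mul (hMu x hx) h2 (norm_nonneg _) hMu0
          _ = δ * (Mu + Mv) := by ring
      have hden : m / 2 * m ≤ ‖MvPolynomial.eval x Q * v x‖ := by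
        rw [norm_mul]
        exact mul_le_mul (hQlb x hx) (hmle x hx) hm.le (norm_nonneg _)
      have hden0 : 0 < m / 2 * m := by positivity
      calc ‖MvPolynomial.eval x P * v x - MvPolynomial.eval x Q * u x‖
              / ‖MvPolynomial.eval x Q * v x‖
          ≤ δ * (Mu + Mv) / (m / 2 * m) :=
            div_le_div₀ (by positivity) hnum hden0 hden
        _ ≤ ε / 2 := by
            rw [div_le_iff₀ hden0]
            have hδ2 : δ ≤ ε * (m * m) / (4 * (Mu + Mv + 1)) := min_le_right _ _
            have h4 : (0:ℝ) < 4 * (Mu + Mv + 1) := by positivity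
            rw [le_div_iff₀ h4] at hδ2
            nlinarith [hδ0.le, hm.le, hε.le]
    -- use rational hull hypothesis
    have hrat := hz P Q hQ0
    have hSP : sSup ((fun w => ‖MvPolynomial.eval w P / MvPolynomial.eval w Q‖) '' K)
        ≤ S + ε / 2 := by
      apply csSup_le (hKne.image _)
      rintro y ⟨w, hw, rfl⟩
      have h1 := key w (hKC hw)
      have h2 : ‖MvPolynomial.eval w P / MvPolynomial.eval w Q‖
          ≤ ‖u w / v w‖ + ε / 2 := by
        have := norm_sub_norm_le (MvPolynomial.eval w P / MvPolynomial.eval w Q) (u w / v w)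
        linarith
      exact le_trans h2 (by linarith [hSle w hw])
    have hz1 : ‖u z / v z‖ ≤ ‖MvPolynomial.eval z P / MvPolynomial.eval z Q‖ + ε / 2 := by
      have h1 := key z hzC
      have := norm_sub_norm_le (u z / v z) (MvPolynomial.eval z P / MvPolynomial.eval z Q)
      rw [norm_sub_rev] at h1
      linarith
    calc ‖u z / v z‖ ≤ ‖MvPolynomial.eval z P / MvPolynomial.eval z Q‖ + ε / 2 := hz1
      _ ≤ (S + ε / 2) + ε / 2 := by linarith [le_trans hrat hSP]
      _ = S + ε := by ring
end

section
/- Let n ≥ 1 and let K ⊆ ℂⁿ be a nonempty compact set. Then h(K) ⊆ Ĥ(K): if z ∈ ℂⁿ is such that every entire function vanishing at z has a zero on K, then for all entire u, v with v nonvanishing on K ∪ {z} one has ‖u(z)/v(z)‖ ≤ sup_{w ∈ K} ‖u(w)/v(w)‖. -/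
open Set

/-- `h(K) ⊆ Ĥ(K)` for every nonempty compact `K ⊆ ℂⁿ`. -/
theorem hypHull_subset_merHull {n : ℕ} (hn : 1 ≤ n) (K : Set (Fin n → ℂ))
    (hK : IsCompact K) (hKne : K.Nonempty) :
    hypHull K ⊆ merHull K := by
  intro z hz u v hu hv hvne
  have hvz : v z ≠ 0 := hvne z (Or.inr rfl)
  -- the entire function vanishing at z
  set f : (Fin n → ℂ) → ℂ := fun w => u w * v z - u z * v w with hf
  have hfE : Entire f := by
    intro x hx
    exact ((hu x hx).mul analyticAt_const).sub (analyticAt_const.mul (hv x hx))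
  have hfz : f z = 0 := by simp [hf, mul_comm]
  obtain ⟨w₀, hw₀K, hw₀⟩ := hz f hfE hfz
  have hvw₀ : v w₀ ≠ 0 := hvne w₀ (Or.inl hw₀K)
  have heq : u z / v z = u w₀ / v w₀ := by
    rw [div_eq_div_iff hvz hvw₀]
    exact (sub_eq_zero.mp hw₀).symm
  have hcont : ContinuousOn (fun w => ‖u w / v w‖) K := by
    apply ContinuousOn.norm
    exact ContinuousOn.div (hu.continuousOn.mono (subset_univ K))
      (hv.continuousOn.mono (subset_univ K)) (fun x hx => hvne x (Or.inl hx))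
  have hbdd : BddAbove ((fun w => ‖u w / v w‖) '' K) :=
    (hK.image_of_continuousOn hcont).bddAbove
  rw [heq]
  exact le_csSup hbdd ⟨w₀, hw₀K, rfl⟩
end

section
/- Let Ω ⊆ ℂⁿ be a nonempty connected open meromorphically convex set, and let K ⊆ Ω be a nonempty compact set whose inner hull equals its meromorphic hull: K̃_Ω(K) = Ĥ_Ω(K). Then Ĥ_Ω(Ĥ_Ω(K)) = Ĥ_Ω(K). -/
open Set

/-- A meromorphic function on an open set `Ω` in a complex normed space `E`, given by
an open cover of `Ω` together with local holomorphic numerators and denominators,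
the denominators vanishing identically on no nonempty open subset, and compatible
on overlaps. -/
structure MeroFun {E : Type*} [NormedAddCommGroup E] [NormedSpace ℂ E]
    (Ω : Set E) where
  ι : Type
  U : ι → Set E
  isOpen_U : ∀ i, IsOpen (U i)
  U_subset : ∀ i, U i ⊆ Ω
  covers : Ω ⊆ ⋃ i, U i
  num : ι → E → ℂ
  den : ι → E → ℂ
  num_holo : ∀ i, DifferentiableOn ℂ (num i) (U i)
  den_holo : ∀ i, DifferentiableOn ℂ (den i) (U i)
  den_ne : ∀ i, ∀ W : Set E, IsOpen W → W.Nonempty → W ⊆ U i → ∃ z ∈ W, den i z ≠ 0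
  compat : ∀ i j, ∀ z ∈ U i ∩ U j, num i z * den j z = num j z * den i z

/-- `f` is holomorphic at `p` with value `c`: near `p`, `num/den` agrees with a
quotient `w/t` of holomorphic functions with `t(p) ≠ 0`, and `c = w(p)/t(p)`. -/
def MeroFun.IsHolomorphicAt {E : Type*} [NormedAddCommGroup E] [NormedSpace ℂ E]
    {Ω : Set E} (f : MeroFun Ω) (p : E) (c : ℂ) : Prop :=
  ∃ i, p ∈ f.U i ∧ ∃ W : Set E, IsOpen W ∧ p ∈ W ∧ W ⊆ f.U i ∧
    ∃ w t : E → ℂ, DifferentiableOn ℂ w W ∧ DifferentiableOn ℂ t W ∧ t p ≠ 0 ∧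
      (∀ z ∈ W, f.num i z * t z = w z * f.den i z) ∧ c = w p / t p

/-- The meromorphic hull `Ĥ_Ω(K)` of a compact `K ⊆ Ω`: points `z ∈ Ω` such that every
meromorphic function on `Ω` holomorphic on `K ∪ {z}` satisfies
`‖f(z)‖ ≤ sup_{w ∈ K} ‖f(w)‖`. -/
def merHullOn {E : Type*} [NormedAddCommGroup E] [NormedSpace ℂ E]
    (Ω K : Set E) : Set E :=
  {z ∈ Ω | ∀ f : MeroFun Ω, ∀ c : ℂ, f.IsHolomorphicAt z c →
    ∀ φ : E → ℂ, (∀ w ∈ K, f.IsHolomorphicAt w (φ w)) →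
      ‖c‖ ≤ sSup ((fun w => ‖φ w‖) '' K)}

/-- An open set `Ω` is meromorphically convex if `Ĥ_Ω(K)` is compact for every
compact `K ⊆ Ω`. -/
def MerConvex {E : Type*} [NormedAddCommGroup E] [NormedSpace ℂ E]
    (Ω : Set E) : Prop :=
  ∀ K : Set E, IsCompact K → K ⊆ Ω → IsCompact (merHullOn Ω K)

/-- The inner hull `K̃_Ω(K)`: points `z ∈ Ω` such that every meromorphic function on `Ω`
holomorphic on `K` is also holomorphic at `z` with `‖f(z)‖ ≤ sup_{w ∈ K} ‖f(w)‖`. -/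
def innerHullOn {E : Type*} [NormedAddCommGroup E] [NormedSpace ℂ E]
    (Ω K : Set E) : Set E :=
  {z ∈ Ω | ∀ f : MeroFun Ω, ∀ φ : E → ℂ, (∀ w ∈ K, f.IsHolomorphicAt w (φ w)) →
    ∃ c : ℂ, f.IsHolomorphicAt z c ∧ ‖c‖ ≤ sSup ((fun w => ‖φ w‖) '' K)}


section Aux
variable {E : Type*} [NormedAddCommGroup E] [NormedSpace ℂ E] {Ω : Set E}

lemma MeroFun.exists_den_ne (f : MeroFun Ω) (i j : f.ι) (B : Set E) (hB : IsOpen B)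
    (hBne : B.Nonempty) (hBi : B ⊆ f.U i) (hBj : B ⊆ f.U j) :
    ∃ z ∈ B, f.den i z ≠ 0 ∧ f.den j z ≠ 0 := by
  obtain ⟨z1, hz1B, hz1⟩ := f.den_ne i B hB hBne hBi
  have hci : ContinuousAt (f.den i) z1 :=
    (f.den_holo i).continuousOn.continuousAt ((f.isOpen_U i).mem_nhds (hBi hz1B))
  have hev : ∀ᶠ z in nhds z1, f.den i z ≠ 0 ∧ z ∈ B :=
    (hci.eventually_ne hz1).and (hB.mem_nhds hz1B)
  obtain ⟨B', hB'sub, hB'open, hz1B'⟩ := eventually_nhds_iff.mp hev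
  obtain ⟨z2, hz2B', hz2⟩ := f.den_ne j B' hB'open ⟨z1, hz1B'⟩
    (fun z hz => hBj (hB'sub z hz).2)
  exact ⟨z2, (hB'sub z2 hz2B').2, (hB'sub z2 hz2B').1, hz2⟩

/-- Uniqueness of the value of a meromorphic function at a point. -/
lemma MeroFun.value_unique (f : MeroFun Ω) {p : E} {c c' : ℂ}
    (h : f.IsHolomorphicAt p c) (h' : f.IsHolomorphicAt p c') : c = c' := by
  obtain ⟨i, hpi, W, hWo, hpW, hWU, w, t, hw, ht, htp, heq, hc⟩ := h
  obtain ⟨j, hpj, W', hW'o, hpW', hW'U, w', t', hw', ht', ht'p, heq', hc'⟩ := h'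
  set V := W ∩ W' with hVdef
  have hVo : IsOpen V := hWo.inter hW'o
  have hpV : p ∈ V := ⟨hpW, hpW'⟩
  have key : ∀ z ∈ V, f.den i z ≠ 0 → f.den j z ≠ 0 → w z * t' z - w' z * t z = 0 := by
    intro z hz hdi hdj
    have e1 := heq z hz.1
    have e2 := heq' z hz.2
    have e3 := f.compat i j z ⟨hWU hz.1, hW'U hz.2⟩
    have hprod : (w z * t' z - w' z * t z) * (f.den i z * f.den j z) = 0 := by
      linear_combination (-(t' z * f.den j z)) * e1 + (t z * f.den i z) * e2 +
        (t z * t' z) * e3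
    rcases mul_eq_zero.mp hprod with h0 | h0
    · exact h0
    · exact absurd h0 (mul_ne_zero hdi hdj)
  set g : E → ℂ := fun z => w z * t' z - w' z * t z with hgdef
  have hgp : g p = 0 := by
    by_contra hgp
    have hcg : ContinuousAt g p := by
      have h1 : ContinuousAt w p := hw.continuousOn.continuousAt (hWo.mem_nhds hpW)
      have h2 : ContinuousAt t p := ht.continuousOn.continuousAt (hWo.mem_nhds hpW)
      have h3 : ContinuousAt w' p := hw'.continuousOn.continuousAt (hW'o.mem_nhds hpW')
      have h4 : ContinuousAt t' p := ht'.continuousOn.continuousAt (hW'o.mem_nhds hpW')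
      exact (h1.mul h4).sub (h3.mul h2)
    have hev : ∀ᶠ z in nhds p, g z ≠ 0 ∧ z ∈ V :=
      (hcg.eventually_ne hgp).and (hVo.mem_nhds hpV)
    obtain ⟨B, hBsub, hBo, hpB⟩ := eventually_nhds_iff.mp hev
    obtain ⟨z, hzB, hdi, hdj⟩ := f.exists_den_ne i j B hBo ⟨p, hpB⟩
      (fun z hz => hWU (hBsub z hz).2.1) (fun z hz => hW'U (hBsub z hz).2.2)
    exact (hBsub z hzB).1 (key z (hBsub z hzB).2 hdi hdj)
  have hwp : w p * t' p = w' p * t p := sub_eq_zero.mp hgp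
  rw [hc, hc']
  field_simp
  linear_combination hwp

/-- Value function is continuous on a set where `f` is holomorphic. -/
lemma MeroFun.continuousOn_value (f : MeroFun Ω) {K : Set E} {φ : E → ℂ}
    (hφ : ∀ w ∈ K, f.IsHolomorphicAt w (φ w)) : ContinuousOn φ K := by
  intro p hp
  obtain ⟨i, hpi, W, hWo, hpW, hWU, w, t, hw, ht, htp, heq, hc⟩ := hφ p hp
  have hct : ContinuousAt t p := ht.continuousOn.continuousAt (hWo.mem_nhds hpW)
  have hev : ∀ᶠ z in nhds p, t z ≠ 0 ∧ z ∈ W := (hct.eventually_ne htp).and (hWo.mem_nhds hpW)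
  obtain ⟨V, hVsub, hVo, hpV⟩ := eventually_nhds_iff.mp hev
  have hval : ∀ z ∈ V ∩ K, φ z = w z / t z := by
    intro z hz
    refine f.value_unique (hφ z hz.2) ⟨i, hWU (hVsub z hz.1).2, W, hWo, (hVsub z hz.1).2,
      hWU, w, t, hw, ht, (hVsub z hz.1).1, heq, rfl⟩
  have hcwt : ContinuousAt (fun z => w z / t z) p :=
    (hw.continuousOn.continuousAt (hWo.mem_nhds hpW)).div
      (ht.continuousOn.continuousAt (hWo.mem_nhds hpW)) htp
  have : ContinuousWithinAt (fun z => w z / t z) K p := hcwt.continuousWithinAt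
  refine this.congr_of_eventuallyEq ?_ (by rw [hval p ⟨hpV, hp⟩])
  filter_upwards [nhdsWithin_le_nhds (hVo.mem_nhds hpV), self_mem_nhdsWithin] with z h1 h2
  exact hval z ⟨h1, h2⟩

/-- `K` is contained in its meromorphic hull. -/
lemma subset_merHullOn {K : Set E} (hK : IsCompact K) (hKΩ : K ⊆ Ω) :
    K ⊆ merHullOn Ω K := by
  intro p hp
  refine ⟨hKΩ hp, fun f c hc φ hφ => ?_⟩
  have hcphi : c = φ p := f.value_unique hc (hφ p hp)
  have hcont : ContinuousOn (fun z => ‖φ z‖) K := (f.continuousOn_value hφ).norm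
  have hbdd : BddAbove ((fun w => ‖φ w‖) '' K) := (hK.image_of_continuousOn hcont).bddAbove
  rw [hcphi]
  exact le_csSup hbdd ⟨p, hp, rfl⟩

end Aux

/-- If `Ω ⊆ ℂⁿ` is a nonempty connected open meromorphically convex set and `K ⊆ Ω`
is a nonempty compact set whose inner hull equals its meromorphic hull, then the
meromorphic hull is idempotent on `K`. -/
theorem merHullOn_idem {n : ℕ} (Ω : Set (Fin n → ℂ))
    (hΩopen : IsOpen Ω) (hΩconn : IsConnected Ω) (hΩmc : MerConvex Ω)
    (K : Set (Fin n → ℂ)) (hK : IsCompact K) (hKne : K.Nonempty) (hKΩ : K ⊆ Ω)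
    (hinner : innerHullOn Ω K = merHullOn Ω K) :
    merHullOn Ω (merHullOn Ω K) = merHullOn Ω K := by
  classical
  set H := merHullOn Ω K with hHdef
  have hKH : K ⊆ H := subset_merHullOn hK hKΩ
  apply Subset.antisymm
  · -- merHullOn Ω H ⊆ H
    rintro z ⟨hzΩ, hz⟩
    refine ⟨hzΩ, fun f c hc φ hφ => ?_⟩
    set M := sSup ((fun w => ‖φ w‖) '' K) with hM
    -- build a value function on H using the inner hull
    have hch : ∀ w ∈ H, ∃ d : ℂ, f.IsHolomorphicAt w d ∧ ‖d‖ ≤ M := by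
      intro w hw
      rw [← hinner] at hw
      exact hw.2 f φ hφ
    set ψ : (Fin n → ℂ) → ℂ := fun w => if h : w ∈ H then (hch w h).choose else 0 with hψ
    have hψholo : ∀ w ∈ H, f.IsHolomorphicAt w (ψ w) := by
      intro w hw
      simp only [hψ, dif_pos hw]
      exact (hch w hw).choose_spec.1
    have hψbd : ∀ w ∈ H, ‖ψ w‖ ≤ M := by
      intro w hw
      simp only [hψ, dif_pos hw]
      exact (hch w hw).choose_spec.2
    have h1 : ‖c‖ ≤ sSup ((fun w => ‖ψ w‖) '' H) := hz f c hc ψ hψholo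
    refine h1.trans (csSup_le ?_ ?_)
    · obtain ⟨k, hk⟩ := hKne
      exact ⟨‖ψ k‖, k, hKH hk, rfl⟩
    · rintro x ⟨w, hw, rfl⟩
      exact hψbd w hw
  · -- H ⊆ merHullOn Ω H
    rintro z ⟨hzΩ, hz⟩
    refine ⟨hzΩ, fun f c hc ψ hψ => ?_⟩
    have hψK : ∀ w ∈ K, f.IsHolomorphicAt w (ψ w) := fun w hw => hψ w (hKH hw)
    have h1 : ‖c‖ ≤ sSup ((fun w => ‖ψ w‖) '' K) := hz f c hc ψ hψK
    refine h1.trans (csSup_le_csSup ?_ ?_ (image_mono hKH))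
    · -- BddAbove of image over H
      refine ⟨sSup ((fun w => ‖ψ w‖) '' K), ?_⟩
      rintro x ⟨w, hw, rfl⟩
      exact hw.2 f (ψ w) (hψ w hw) ψ hψK
    · obtain ⟨k, hk⟩ := hKne
      exact ⟨‖ψ k‖, k, hk, rfl⟩
end

section
/- Let X, Y ⊆ ℂⁿ be connected open sets, each meromorphically convex, such that X ∩ Y is nonempty and connected. Then X ∩ Y is meromorphically convex. -/
open Set

/-- Restriction of a meromorphic function to a smaller open set. -/
def MeroFun.restrict {E : Type*} [NormedAddCommGroup E] [NormedSpace ℂ E]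
    {Ω : Set E} (f : MeroFun Ω) (Ω' : Set E) (hO : IsOpen Ω') (h : Ω' ⊆ Ω) :
    MeroFun Ω' where
  ι := f.ι
  U i := f.U i ∩ Ω'
  isOpen_U i := (f.isOpen_U i).inter hO
  U_subset i := inter_subset_right
  covers := fun z hz => by
    obtain ⟨_, ⟨i, rfl⟩, hi⟩ := f.covers (h hz)
    exact mem_iUnion.2 ⟨i, hi, hz⟩
  num := f.num
  den := f.den
  num_holo i := (f.num_holo i).mono inter_subset_left
  den_holo i := (f.den_holo i).mono inter_subset_left
  den_ne i W hW hne hsub := f.den_ne i W hW hne (hsub.trans inter_subset_left)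
  compat i j z hz := f.compat i j z ⟨hz.1.1, hz.2.1⟩

lemma MeroFun.IsHolomorphicAt.restrict {E : Type*} [NormedAddCommGroup E]
    [NormedSpace ℂ E] {Ω : Set E} {f : MeroFun Ω} {p : E} {c : ℂ}
    (hf : f.IsHolomorphicAt p c) (Ω' : Set E) (hO : IsOpen Ω') (h : Ω' ⊆ Ω)
    (hp : p ∈ Ω') : (f.restrict Ω' hO h).IsHolomorphicAt p c := by
  obtain ⟨i, hi, W, hWo, hpW, hWU, w, t, hw, ht, htp, heq, hc⟩ := hf
  exact ⟨i, ⟨hi, hp⟩, W ∩ Ω', hWo.inter hO, ⟨hpW, hp⟩,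
    inter_subset_inter hWU subset_rfl, w, t, hw.mono inter_subset_left,
    ht.mono inter_subset_left, htp, fun z hz => heq z hz.1, hc⟩

/-- A meromorphic function holomorphic at `p` is holomorphic on a neighborhood,
with value given by a continuous quotient. -/
lemma MeroFun.IsHolomorphicAt.nhds {E : Type*} [NormedAddCommGroup E]
    [NormedSpace ℂ E] {Ω : Set E} {f : MeroFun Ω} {p : E} {c : ℂ}
    (hf : f.IsHolomorphicAt p c) :
    ∃ V : Set E, IsOpen V ∧ p ∈ V ∧ ∃ w t : E → ℂ, ContinuousOn w V ∧
      ContinuousOn t V ∧ (∀ z ∈ V, t z ≠ 0) ∧ c = w p / t p ∧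
      ∀ z ∈ V, f.IsHolomorphicAt z (w z / t z) := by
  obtain ⟨i, hi, W, hWo, hpW, hWU, w, t, hw, ht, htp, heq, hc⟩ := hf
  have htc : ContinuousOn t W := ht.continuousOn
  refine ⟨W ∩ t ⁻¹' {0}ᶜ, htc.isOpen_inter_preimage hWo isOpen_compl_singleton,
    ⟨hpW, htp⟩, w, t, (hw.continuousOn).mono inter_subset_left,
    htc.mono inter_subset_left, fun z hz => hz.2, hc, fun z hz =>
    ⟨i, hWU hz.1, W, hWo, hz.1, hWU, w, t, hw, ht, hz.2, heq, rfl⟩⟩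

lemma merHullOn_mem_of_closure {E : Type*} [NormedAddCommGroup E]
    [NormedSpace ℂ E] {Ω K : Set E} {z : E}
    (hz : z ∈ closure (merHullOn Ω K)) (hzΩ : z ∈ Ω) : z ∈ merHullOn Ω K := by
  refine ⟨hzΩ, fun f c hfc φ hφ => ?_⟩
  obtain ⟨V, hVo, hpV, w, t, hwc, htc, htne, hc, hholo⟩ := hfc.nhds
  have hne : (nhdsWithin z (merHullOn Ω K)).NeBot :=
    mem_closure_iff_nhdsWithin_neBot.mp hz
  have hcont : Filter.Tendsto (fun z' => ‖w z' / t z'‖)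
      (nhdsWithin z (merHullOn Ω K)) (nhds ‖w z / t z‖) := by
    have : ContinuousAt (fun z' => ‖w z' / t z'‖) z := by
      have hwz : ContinuousAt w z := hwc.continuousAt (hVo.mem_nhds hpV)
      have htz : ContinuousAt t z := htc.continuousAt (hVo.mem_nhds hpV)
      exact (hwz.div htz (htne z hpV)).norm
    exact this.tendsto.mono_left nhdsWithin_le_nhds
  have hev : ∀ᶠ z' in nhdsWithin z (merHullOn Ω K),
      ‖w z' / t z'‖ ≤ sSup ((fun w => ‖φ w‖) '' K) := by
    filter_upwards [nhdsWithin_le_nhds (hVo.mem_nhds hpV),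
      self_mem_nhdsWithin] with z' hz'V hz'H
    exact hz'H.2 f _ (hholo z' hz'V) φ hφ
  have := le_of_tendsto hcont hev
  rwa [hc]

lemma merHullOn_subset_of_subset {E : Type*} [NormedAddCommGroup E]
    [NormedSpace ℂ E] {Ω Ω' K : Set E} (hO' : IsOpen Ω') (h : Ω' ⊆ Ω)
    (hK : K ⊆ Ω') : merHullOn Ω' K ⊆ merHullOn Ω K := by
  rintro z ⟨hzΩ', hz⟩
  refine ⟨h hzΩ', fun f c hfc φ hφ => ?_⟩
  exact hz (f.restrict Ω' hO' h) c (hfc.restrict Ω' hO' h hzΩ') φ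
    (fun v hv => (hφ v hv).restrict Ω' hO' h (hK hv))

/-- The intersection of two meromorphically convex connected open sets in `ℂⁿ`, if
nonempty and connected, is meromorphically convex. -/
theorem merConvex_inter {n : ℕ} (X Y : Set (Fin n → ℂ))
    (hXopen : IsOpen X) (hXconn : IsConnected X) (hXmc : MerConvex X)
    (hYopen : IsOpen Y) (hYconn : IsConnected Y) (hYmc : MerConvex Y)
    (hXYconn : IsConnected (X ∩ Y)) :
    MerConvex (X ∩ Y) := by
  intro K hK hKsub
  have hXYopen : IsOpen (X ∩ Y) := hXopen.inter hYopen
  have hsubX : merHullOn (X ∩ Y) K ⊆ merHullOn X K :=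
    merHullOn_subset_of_subset hXYopen inter_subset_left hKsub
  have hsubY : merHullOn (X ∩ Y) K ⊆ merHullOn Y K :=
    merHullOn_subset_of_subset hXYopen inter_subset_right hKsub
  have hCX : IsCompact (merHullOn X K) :=
    hXmc K hK (hKsub.trans inter_subset_left)
  have hCY : IsCompact (merHullOn Y K) :=
    hYmc K hK (hKsub.trans inter_subset_right)
  have hC : IsCompact (merHullOn X K ∩ merHullOn Y K) :=
    hCX.inter_right hCY.isClosed
  have hsub : merHullOn (X ∩ Y) K ⊆ merHullOn X K ∩ merHullOn Y K :=
    subset_inter hsubX hsubY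
  have hsubXY : merHullOn X K ∩ merHullOn Y K ⊆ X ∩ Y := fun z hz =>
    ⟨hz.1.1, hz.2.1⟩
  have hclosed : IsClosed (merHullOn (X ∩ Y) K) := by
    refine isClosed_of_closure_subset fun z hz => ?_
    have hzC : z ∈ merHullOn X K ∩ merHullOn Y K :=
      closure_minimal hsub hC.isClosed hz
    exact merHullOn_mem_of_closure hz (hsubXY hzC)
  exact hC.of_isClosed_subset hclosed hsub
end

section
/- Let Ω₁ ⊆ ℂⁿ and Ω₂ ⊆ ℂᵐ be connected open meromorphically convex sets. Then the product Ω₁ × Ω₂, as an open subset of ℂⁿ × ℂᵐ, is meromorphically convex. -/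
open Set

/-- Pullback of a meromorphic function along a differentiable open map. -/
noncomputable def MeroFun.pullback {E F : Type*} [NormedAddCommGroup E] [NormedSpace ℂ E]
    [NormedAddCommGroup F] [NormedSpace ℂ F] {Ω : Set E} (f : MeroFun Ω)
    (π : F → E) (hπd : Differentiable ℂ π) (hπo : IsOpenMap π)
    (S : Set F) (hS : IsOpen S) (hmaps : Set.MapsTo π S Ω) : MeroFun S where
  ι := f.ι
  U i := π ⁻¹' (f.U i) ∩ S
  isOpen_U i := ((f.isOpen_U i).preimage hπd.continuous).inter hS
  U_subset i := Set.inter_subset_right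
  covers := by
    intro p hp
    obtain ⟨V, ⟨i, rfl⟩, hpi⟩ := f.covers (hmaps hp)
    exact Set.mem_iUnion.2 ⟨i, hpi, hp⟩
  num i := f.num i ∘ π
  den i := f.den i ∘ π
  num_holo i := (f.num_holo i).comp hπd.differentiableOn
    (fun x hx => hx.1)
  den_holo i := (f.den_holo i).comp hπd.differentiableOn
    (fun x hx => hx.1)
  den_ne := by
    intro i W hWo hWne hWsub
    obtain ⟨z, ⟨p, hpW, rfl⟩, hz⟩ := f.den_ne i (π '' W) (hπo W hWo)
      (hWne.image π) (fun z ⟨p, hpW, hpz⟩ => hpz ▸ (hWsub hpW).1)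
    exact ⟨p, hpW, hz⟩
  compat := fun i j z hz => f.compat i j (π z) ⟨hz.1.1, hz.2.1⟩

lemma MeroFun.pullback_isHolomorphicAt {E F : Type*} [NormedAddCommGroup E] [NormedSpace ℂ E]
    [NormedAddCommGroup F] [NormedSpace ℂ F] {Ω : Set E} (f : MeroFun Ω)
    (π : F → E) (hπd : Differentiable ℂ π) (hπo : IsOpenMap π)
    (S : Set F) (hS : IsOpen S) (hmaps : Set.MapsTo π S Ω)
    {p : F} {c : ℂ} (hp : p ∈ S) (h : f.IsHolomorphicAt (π p) c) :
    (f.pullback π hπd hπo S hS hmaps).IsHolomorphicAt p c := by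
  obtain ⟨i, hpi, W, hWo, hpW, hWU, w, t, hw, ht, htp, heq, hc⟩ := h
  refine ⟨i, ⟨hpi, hp⟩, (π ⁻¹' W) ∩ S, (hWo.preimage hπd.continuous).inter hS,
    ⟨hpW, hp⟩, fun x hx => ⟨hWU hx.1, hx.2⟩, w ∘ π, t ∘ π,
    hw.comp hπd.differentiableOn (fun x hx => hx.1),
    ht.comp hπd.differentiableOn (fun x hx => hx.1), htp,
    fun z hz => heq (π z) hz.1, hc⟩

/-- The complement of the meromorphic hull within an open `Ω` is open. -/
lemma isOpen_diff_merHullOn {E : Type*} [NormedAddCommGroup E] [NormedSpace ℂ E]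
    {Ω : Set E} (K : Set E) (hΩ : IsOpen Ω) : IsOpen (Ω \ merHullOn Ω K) := by
  rw [isOpen_iff_mem_nhds]
  rintro z ⟨hzΩ, hzH⟩
  rw [merHullOn, Set.mem_setOf_eq] at hzH
  push_neg at hzH
  obtain ⟨f, c, hfc, φ, hφ, hM⟩ := hzH hzΩ
  set M := sSup ((fun w => ‖φ w‖) '' K) with hMdef
  obtain ⟨i, hzi, W, hWo, hzW, hWU, w, t, hw, ht, htz, heq, hc⟩ := hfc
  have hcw : ContinuousAt w z := (hw.differentiableAt (hWo.mem_nhds hzW)).continuousAt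
  have hct : ContinuousAt t z := (ht.differentiableAt (hWo.mem_nhds hzW)).continuousAt
  have hg : ContinuousAt (fun x => ‖w x / t x‖) z := ((hcw.div hct htz).norm)
  have hMlt : M < ‖w z / t z‖ := hc ▸ hM
  have h1 : ∀ᶠ x in nhds z, x ∈ W := hWo.eventually_mem hzW
  have h2 : ∀ᶠ x in nhds z, x ∈ Ω := hΩ.eventually_mem hzΩ
  have h3 : ∀ᶠ x in nhds z, t x ≠ 0 := hct.eventually_ne htz
  have h4 : ∀ᶠ x in nhds z, M < ‖w x / t x‖ := hg.eventually (eventually_gt_nhds hMlt)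
  filter_upwards [h1, h2, h3, h4] with x hxW hxΩ hxt hxM
  refine ⟨hxΩ, fun hxH => ?_⟩
  have := hxH.2 f (w x / t x)
    ⟨i, hWU hxW, W, hWo, hxW, hWU, w, t, hw, ht, hxt, heq, rfl⟩ φ hφ
  exact absurd this (not_le.2 hxM)

/-- The product of two meromorphically convex connected open sets `Ω₁ ⊆ ℂⁿ`, `Ω₂ ⊆ ℂᵐ`
is a meromorphically convex open subset of `ℂⁿ × ℂᵐ`. -/
theorem merConvex_prod {n m : ℕ} (Ω₁ : Set (Fin n → ℂ)) (Ω₂ : Set (Fin m → ℂ))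
    (hΩ₁open : IsOpen Ω₁) (hΩ₁conn : IsConnected Ω₁) (hΩ₁mc : MerConvex Ω₁)
    (hΩ₂open : IsOpen Ω₂) (hΩ₂conn : IsConnected Ω₂) (hΩ₂mc : MerConvex Ω₂) :
    MerConvex (Ω₁ ×ˢ Ω₂) := by
  intro K hK hKΩ
  have hΩopen : IsOpen (Ω₁ ×ˢ Ω₂) := hΩ₁open.prod hΩ₂open
  have hK1 : IsCompact (Prod.fst '' K) := hK.image continuous_fst
  have hK2 : IsCompact (Prod.snd '' K) := hK.image continuous_snd
  have hK1Ω : Prod.fst '' K ⊆ Ω₁ := by rintro _ ⟨p, hp, rfl⟩; exact (hKΩ hp).1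
  have hK2Ω : Prod.snd '' K ⊆ Ω₂ := by rintro _ ⟨p, hp, rfl⟩; exact (hKΩ hp).2
  have hC1 := hΩ₁mc _ hK1 hK1Ω
  have hC2 := hΩ₂mc _ hK2 hK2Ω
  have hmaps1 : Set.MapsTo Prod.fst (Ω₁ ×ˢ Ω₂) Ω₁ := fun p hp => hp.1
  have hmaps2 : Set.MapsTo Prod.snd (Ω₁ ×ˢ Ω₂) Ω₂ := fun p hp => hp.2
  have hsub : merHullOn (Ω₁ ×ˢ Ω₂) K ⊆
      (merHullOn Ω₁ (Prod.fst '' K)) ×ˢ (merHullOn Ω₂ (Prod.snd '' K)) := by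
    rintro z ⟨hzΩ, hz⟩
    constructor
    · refine ⟨hzΩ.1, fun f c hfc φ hφ => ?_⟩
      have hol := f.pullback_isHolomorphicAt Prod.fst differentiable_fst isOpenMap_fst
        (Ω₁ ×ˢ Ω₂) hΩopen hmaps1 hzΩ hfc
      have key := hz (f.pullback Prod.fst differentiable_fst isOpenMap_fst
        (Ω₁ ×ˢ Ω₂) hΩopen hmaps1) c hol (φ ∘ Prod.fst)
        (fun w hw => f.pullback_isHolomorphicAt Prod.fst differentiable_fst isOpenMap_fst
          (Ω₁ ×ˢ Ω₂) hΩopen hmaps1 (hKΩ hw) (hφ w.1 ⟨w, hw, rfl⟩))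
      calc ‖c‖ ≤ sSup ((fun w => ‖(φ ∘ Prod.fst) w‖) '' K) := key
        _ = sSup ((fun w => ‖φ w‖) '' (Prod.fst '' K)) := by
            rw [← Set.image_comp]; rfl
    · refine ⟨hzΩ.2, fun f c hfc φ hφ => ?_⟩
      have hol := f.pullback_isHolomorphicAt Prod.snd differentiable_snd isOpenMap_snd
        (Ω₁ ×ˢ Ω₂) hΩopen hmaps2 hzΩ hfc
      have key := hz (f.pullback Prod.snd differentiable_snd isOpenMap_snd
        (Ω₁ ×ˢ Ω₂) hΩopen hmaps2) c hol (φ ∘ Prod.snd)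
        (fun w hw => f.pullback_isHolomorphicAt Prod.snd differentiable_snd isOpenMap_snd
          (Ω₁ ×ˢ Ω₂) hΩopen hmaps2 (hKΩ hw) (hφ w.2 ⟨w, hw, rfl⟩))
      calc ‖c‖ ≤ sSup ((fun w => ‖(φ ∘ Prod.snd) w‖) '' K) := key
        _ = sSup ((fun w => ‖φ w‖) '' (Prod.snd '' K)) := by
            rw [← Set.image_comp]; rfl
  have hCΩ : (merHullOn Ω₁ (Prod.fst '' K)) ×ˢ (merHullOn Ω₂ (Prod.snd '' K)) ⊆ Ω₁ ×ˢ Ω₂ :=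
    Set.prod_mono (fun x hx => hx.1) (fun x hx => hx.1)
  have hSopen := isOpen_diff_merHullOn K hΩopen
  have heq : merHullOn (Ω₁ ×ˢ Ω₂) K =
      ((Ω₁ ×ˢ Ω₂) \ merHullOn (Ω₁ ×ˢ Ω₂) K)ᶜ ∩
        ((merHullOn Ω₁ (Prod.fst '' K)) ×ˢ (merHullOn Ω₂ (Prod.snd '' K))) := by
    ext x
    constructor
    · exact fun hx => ⟨fun hc => hc.2 hx, hsub hx⟩
    · rintro ⟨hx1, hx2⟩
      by_contra h
      exact hx1 ⟨hCΩ hx2, h⟩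
  rw [heq]
  exact (hC1.prod hC2).inter_left hSopen.isClosed_compl
end

section
/- Let n ≥ 1 and let K ⊆ ℂⁿ be a nonempty compact set. Then: (a) every entire function v that is nonvanishing on K is nonvanishing on h(K), so every quotient u/v of entire functions with v nonvanishing on K is holomorphic on a neighborhood of h(K); and (b) for every z ∈ ℂⁿ with z ∉ h(K), there exist entire functions u, v with v nonvanishing on an open neighborhood of K such that for no open neighborhood V of z does there exist a holomorphic function g on V with g(y)·v(y) = u(y) for all y ∈ V (that is, the meromorphic function u/v, which is holomorphic near K, does not extend holomorphically to z). In this sense h(K) is the largest set to which all meromorphic functions on ℂⁿ that are holomorphic near K extend holomorphically. -/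
open Set

/-- `h(K)` is the largest set to which all meromorphic functions on `ℂⁿ` holomorphic
near `K` extend holomorphically:
(a) every entire `v` nonvanishing on `K` is nonvanishing on `h(K)`, and every quotient
    `u/v` of entire functions with `v` nonvanishing on `K` is holomorphic on an open
    neighborhood of `h(K)`;
(b) for every `z ∉ h(K)` there are entire `u, v` with `v` nonvanishing on an open
    neighborhood of `K` such that `u/v` extends holomorphically to no neighborhood
    of `z`. -/
theorem hypHull_largest_extension_set {n : ℕ} (hn : 1 ≤ n) (K : Set (Fin n → ℂ))
    (hK : IsCompact K) (hKne : K.Nonempty) :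
    (∀ u v : (Fin n → ℂ) → ℂ, Entire u → Entire v → (∀ x ∈ K, v x ≠ 0) →
      (∀ z ∈ hypHull K, v z ≠ 0) ∧
      (∃ U : Set (Fin n → ℂ), IsOpen U ∧ hypHull K ⊆ U ∧
        DifferentiableOn ℂ (fun y => u y / v y) U)) ∧
    (∀ z : Fin n → ℂ, z ∉ hypHull K →
      ∃ u v : (Fin n → ℂ) → ℂ, Entire u ∧ Entire v ∧
        (∃ U : Set (Fin n → ℂ), IsOpen U ∧ K ⊆ U ∧ ∀ x ∈ U, v x ≠ 0) ∧
        ∀ V : Set (Fin n → ℂ), IsOpen V → z ∈ V →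
          ¬ ∃ g : (Fin n → ℂ) → ℂ, DifferentiableOn ℂ g V ∧
            ∀ y ∈ V, g y * v y = u y) := by
  constructor
  · intro u v hu hv hvK
    have hvhull : ∀ z ∈ hypHull K, v z ≠ 0 := by
      intro z hz hz0
      obtain ⟨w, hwK, hw0⟩ := hz v hv hz0
      exact hvK w hwK hw0
    refine ⟨hvhull, {y | v y ≠ 0}, ?_, hvhull, ?_⟩
    · have hc : Continuous v := continuousOn_univ.mp hv.continuousOn
      exact isOpen_compl_singleton.preimage hc
    · intro y hy
      exact ((hu y trivial).div (hv y trivial) hy).differentiableAt.differentiableWithinAt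
  · intro z hz
    simp only [hypHull, mem_setOf_eq] at hz
    push_neg at hz
    obtain ⟨f, hf, hfz, hfK⟩ := hz
    refine ⟨fun _ => 1, f, fun x _ => analyticAt_const, hf,
      ⟨{y | f y ≠ 0}, ?_, fun x hx => hfK x hx, fun x hx => hx⟩, ?_⟩
    · have hc : Continuous f := continuousOn_univ.mp hf.continuousOn
      exact isOpen_compl_singleton.preimage hc
    · rintro V _ hzV ⟨g, _, hg⟩
      have h1 := hg z hzV
      rw [hfz, mul_zero] at h1
      exact one_ne_zero h1.symm
end

section
/- Let n ≥ 1 and let K ⊆ ℂⁿ be a nonempty compact set. Let (u_k) and (v_k) be sequences of entire functions with each v_k nonvanishing on K, and suppose the functions f_k := u_k/v_k converge uniformly on K to a function g : K → ℂ. Then: (a) each v_k is nonvanishing on h(K); (b) the sequence (f_k) converges uniformly on h(K) to a continuous function g̃ : h(K) → ℂ with g̃ = g on K; and (c) sup_{z ∈ h(K)} ‖g̃(z)‖ = sup_{w ∈ K} ‖g(w)‖. -/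
open Set Filter

lemma subset_hypHull {n : ℕ} (K : Set (Fin n → ℂ)) : K ⊆ hypHull K :=
  fun z hz _f _ hf => ⟨z, hz, hf⟩

lemma Entire.continuous {n : ℕ} {f : (Fin n → ℂ) → ℂ} (hf : Entire f) : Continuous f := by
  rw [← continuousOn_univ]; exact hf.continuousOn

lemma key_bound {n : ℕ} {K : Set (Fin n → ℂ)} (hK : IsCompact K) (hKne : K.Nonempty)
    {u v : (Fin n → ℂ) → ℂ} (hu : Entire u) (hv : Entire v)
    (hvK : ∀ x ∈ K, v x ≠ 0) {z} (hz : z ∈ hypHull K) :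
    ‖u z / v z‖ ≤ sSup ((fun w => ‖u w / v w‖) '' K) := by
  have hvz : v z ≠ 0 := fun h0 => by
    obtain ⟨w, hw, h⟩ := hz v hv h0; exact hvK w hw h
  set c := u z / v z with hc
  have hf : Entire (fun x => u x - c * v x) := hu.sub (analyticOnNhd_const.mul hv)
  have hfz : u z - c * v z = 0 := by rw [hc, div_mul_cancel₀ (u z) hvz, sub_self]
  obtain ⟨w, hw, hweq⟩ := hz _ hf hfz
  have hvw := hvK w hw
  have heq : u w / v w = c := by
    have h1 : u w = c * v w := sub_eq_zero.mp hweq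
    rw [h1, mul_div_assoc, div_self hvw, mul_one]
  rw [← heq]
  refine le_csSup ?_ ⟨w, hw, rfl⟩
  exact hK.bddAbove_image ((hu.continuous.continuousOn.div hv.continuous.continuousOn hvK).norm)


/-- If a sequence `f_k = u_k / v_k` of quotients of entire functions, with each `v_k`
nonvanishing on a nonempty compact `K`, converges uniformly on `K` to `g`, then
(a) each `v_k` is nonvanishing on `h(K)`;
(b) the sequence converges uniformly on `h(K)` to a continuous extension `g̃` of `g`;
(c) `sup_{h(K)} ‖g̃‖ = sup_K ‖g‖`. -/
theorem uniform_limit_extends_to_hypHull {n : ℕ} (hn : 1 ≤ n)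
    (K : Set (Fin n → ℂ)) (hK : IsCompact K) (hKne : K.Nonempty)
    (u v : ℕ → (Fin n → ℂ) → ℂ)
    (hu : ∀ k, Entire (u k)) (hv : ∀ k, Entire (v k))
    (hvK : ∀ k, ∀ x ∈ K, v k x ≠ 0)
    (g : (Fin n → ℂ) → ℂ)
    (hconv : TendstoUniformlyOn (fun k z => u k z / v k z) g atTop K) :
    (∀ k, ∀ z ∈ hypHull K, v k z ≠ 0) ∧
    (∃ gt : (Fin n → ℂ) → ℂ, ContinuousOn gt (hypHull K) ∧
      (∀ w ∈ K, gt w = g w) ∧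
      TendstoUniformlyOn (fun k z => u k z / v k z) gt atTop (hypHull K) ∧
      sSup ((fun z => ‖gt z‖) '' hypHull K) = sSup ((fun w => ‖g w‖) '' K)) := by
  have hva : ∀ k, ∀ z ∈ hypHull K, v k z ≠ 0 := by
    intro k z hz h0
    obtain ⟨w, hw, h⟩ := hz (v k) (hv k) h0
    exact hvK k w hw h
  set F : ℕ → (Fin n → ℂ) → ℂ := fun k z => u k z / v k z with hF
  -- uniform Cauchy on the hull
  have hcK : UniformCauchySeqOn F atTop K := hconv.uniformCauchySeqOn
  have hcH : UniformCauchySeqOn F atTop (hypHull K) := by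
    rw [Metric.uniformCauchySeqOn_iff] at hcK ⊢
    intro ε hε
    obtain ⟨N, hN⟩ := hcK (ε/2) (by linarith)
    refine ⟨N, fun m hm k hk z hz => ?_⟩
    set U : (Fin n → ℂ) → ℂ := fun x => u m x * v k x - u k x * v m x with hU
    set V : (Fin n → ℂ) → ℂ := fun x => v m x * v k x with hV
    have hUe : Entire U := ((hu m).mul (hv k)).sub ((hu k).mul (hv m))
    have hVe : Entire V := (hv m).mul (hv k)
    have hVK : ∀ x ∈ K, V x ≠ 0 := fun x hx => mul_ne_zero (hvK m x hx) (hvK k x hx)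
    have hquot : ∀ x : Fin n → ℂ, v m x ≠ 0 → v k x ≠ 0 → U x / V x = F m x - F k x := by
      intro x h1 h2
      simp only [hU, hV, hF]
      field_simp
    have hdist : dist (F m z) (F k z) = ‖U z / V z‖ := by
      rw [hquot z (hva m z hz) (hva k z hz), dist_eq_norm]
    rw [hdist]
    have hle := key_bound hK hKne hUe hVe hVK hz
    have hsup : sSup ((fun w => ‖U w / V w‖) '' K) ≤ ε / 2 := by
      refine csSup_le (hKne.image _) ?_
      rintro _ ⟨w, hw, rfl⟩
      show ‖U w / V w‖ ≤ ε / 2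
      rw [hquot w (hvK m w hw) (hvK k w hw), ← dist_eq_norm]
      exact le_of_lt (hN m hm k hk w hw)
    linarith
  -- pointwise limits on the hull
  have hptc : ∀ z ∈ hypHull K, CauchySeq (fun j => F j z) := fun z hz => hcH.cauchySeq hz
  set gt : (Fin n → ℂ) → ℂ := fun z => limUnder atTop (fun j => F j z) with hgt
  have hpt : ∀ z ∈ hypHull K, Tendsto (fun j => F j z) atTop (nhds (gt z)) :=
    fun z hz => (hptc z hz).tendsto_limUnder
  have htuo : TendstoUniformlyOn F gt atTop (hypHull K) :=
    hcH.tendstoUniformlyOn_of_tendsto hpt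
  have hKH : K ⊆ hypHull K := subset_hypHull K
  have hHne : (hypHull K).Nonempty := hKne.mono hKH
  have hgtg : ∀ w ∈ K, gt w = g w := fun w hw =>
    tendsto_nhds_unique (hpt w (hKH hw)) (hconv.tendsto_at hw)
  have hFcont : ∀ j, ContinuousOn (F j) (hypHull K) := fun j =>
    ((hu j).continuous.continuousOn.div (hv j).continuous.continuousOn (hva j))
  have hgtcont : ContinuousOn gt (hypHull K) :=
    htuo.continuousOn (Eventually.of_forall hFcont).frequently
  -- the sup equality
  have hgcont : ContinuousOn g K :=
    hconv.continuousOn (Eventually.of_forall fun j => (hFcont j).mono hKH).frequently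
  set M : ℝ := sSup ((fun w => ‖g w‖) '' K) with hM
  have hMb : BddAbove ((fun w => ‖g w‖) '' K) := hK.bddAbove_image hgcont.norm
  have hbound : ∀ z ∈ hypHull K, ‖gt z‖ ≤ M := by
    intro z hz
    refine le_of_forall_pos_le_add ?_
    intro ε hε
    rw [Metric.tendstoUniformlyOn_iff] at htuo hconv
    obtain ⟨j, hj1, hj2⟩ := ((htuo (ε/3) (by linarith)).and (hconv (ε/3) (by linarith))).exists
    have h1 : ‖gt z‖ ≤ ‖F j z‖ + ε/3 := by
      have h := hj1 z hz
      rw [dist_eq_norm] at h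
      have := norm_le_insert' (gt z) (F j z)
      linarith
    have h2 : ‖F j z‖ ≤ M + ε/3 := by
      have hle := key_bound hK hKne (hu j) (hv j) (hvK j) hz
      refine hle.trans (csSup_le (hKne.image _) ?_)
      rintro _ ⟨w, hw, rfl⟩
      show ‖u j w / v j w‖ ≤ M + ε/3
      have hd := hj2 w hw
      rw [dist_eq_norm, norm_sub_rev] at hd
      have hgw : ‖g w‖ ≤ M := le_csSup hMb ⟨w, hw, rfl⟩
      have hni : ‖u j w / v j w‖ ≤ ‖g w‖ + ‖u j w / v j w - g w‖ :=
        norm_le_insert' _ _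
      have hfw : ‖u j w / v j w - g w‖ < ε/3 := hd
      linarith
    linarith
  refine ⟨hva, gt, hgtcont, hgtg, htuo, le_antisymm ?_ ?_⟩
  · exact csSup_le (hHne.image _) (by rintro _ ⟨z, hz, rfl⟩; exact hbound z hz)
  · refine csSup_le (hKne.image _) ?_
    rintro _ ⟨w, hw, rfl⟩
    show ‖g w‖ ≤ sSup ((fun z => ‖gt z‖) '' hypHull K)
    have heq : ‖g w‖ = ‖gt w‖ := by rw [hgtg w hw]
    rw [heq]
    refine le_csSup ⟨M, ?_⟩ ⟨w, hKH hw, rfl⟩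
    rintro _ ⟨z, hz, rfl⟩; exact hbound z hz
end

section
/- Let n ≥ 1, let U ⊆ ℂⁿ be a nonempty connected open set, and let f = (f₁, …, fₙ) : U → ℂⁿ have all components complex analytic on U. Suppose f₁, …, fₙ are algebraically dependent, i.e., there exists a nonzero polynomial P ∈ ℂ[X₁, …, Xₙ] (MvPolynomial (Fin n) ℂ) such that P(f₁(z), …, fₙ(z)) = 0 for all z ∈ U. Then for every z ∈ U the differentials df₁(z), …, dfₙ(z) are linearly dependent; equivalently, the ℂ-linear derivative map f'(z) : ℂⁿ → ℂⁿ has determinant zero (is not invertible) at every z ∈ U. -/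
open Set Topology Filter

lemma analyticOnNhd_mvPolynomial_eval {n : ℕ} (P : MvPolynomial (Fin n) ℂ) :
    AnalyticOnNhd ℂ (fun x : Fin n → ℂ => MvPolynomial.eval x P) univ := by
  induction P using MvPolynomial.induction_on with
  | C a =>
    intro x _
    simpa using (analyticAt_const : AnalyticAt ℂ (fun _ : Fin n → ℂ => a) x)
  | add p q hp hq =>
    intro x hx
    simpa [map_add] using (hp x hx).fun_add (hq x hx)
  | mul_X p i hp =>
    intro x hx
    have hproj : AnalyticAt ℂ (fun y : Fin n → ℂ => y i) x :=
      (ContinuousLinearMap.proj i : (Fin n → ℂ) →L[ℂ] ℂ).analyticAt x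
    simpa [map_mul] using (hp x hx).fun_mul hproj

/-- If `f = (f₁, …, fₙ) : U → ℂⁿ` has complex analytic components on a nonempty
connected open set `U ⊆ ℂⁿ` and the `fᵢ` are algebraically dependent (there is a
nonzero polynomial `P` with `P(f₁, …, fₙ) ≡ 0` on `U`), then at every `z ∈ U` the
differentials `df₁(z), …, dfₙ(z)` are linearly dependent; equivalently, the derivative
`f'(z) : ℂⁿ → ℂⁿ` has determinant zero. -/
theorem algebraically_dependent_implies_degenerate_jacobian {n : ℕ} (hn : 1 ≤ n)
    (U : Set (Fin n → ℂ)) (hU : IsOpen U) (hUconn : IsConnected U)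
    (f : (Fin n → ℂ) → (Fin n → ℂ))
    (hf : ∀ i : Fin n, AnalyticOnNhd ℂ (fun z => f z i) U)
    (P : MvPolynomial (Fin n) ℂ) (hP : P ≠ 0)
    (hdep : ∀ z ∈ U, MvPolynomial.eval (f z) P = 0) :
    ∀ z ∈ U,
      (¬ LinearIndependent ℂ (fun i : Fin n =>
          (fderiv ℂ (fun w => f w i) z : (Fin n → ℂ) →L[ℂ] ℂ))) ∧
      LinearMap.det ((fderiv ℂ f z : (Fin n → ℂ) →L[ℂ] (Fin n → ℂ)) :
          (Fin n → ℂ) →ₗ[ℂ] (Fin n → ℂ)) = 0 := by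
  intro z hz
  have hfa : ∀ i, AnalyticAt ℂ (fun w => f w i) z := fun i => hf i z hz
  have hdiff : ∀ i, DifferentiableAt ℂ (fun w => f w i) z := fun i =>
    (hfa i).differentiableAt
  have hfz : AnalyticAt ℂ f z := analyticAt_pi_iff.2 hfa
  set A : (Fin n → ℂ) →L[ℂ] (Fin n → ℂ) := fderiv ℂ f z with hAdef
  set L : Fin n → ((Fin n → ℂ) →L[ℂ] ℂ) := fun i => fderiv ℂ (fun w => f w i) z with hLdef
  have hA : A = ContinuousLinearMap.pi L := fderiv_pi hdiff
  have hAi : ∀ w i, A w i = L i w := by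
    intro w i; rw [hA]; rfl
  -- determinant is zero
  have hdet : LinearMap.det (A : (Fin n → ℂ) →ₗ[ℂ] (Fin n → ℂ)) = 0 := by
    by_contra hne
    have hsurj : Function.Surjective (A : (Fin n → ℂ) →ₗ[ℂ] (Fin n → ℂ)) :=
      (LinearMap.equivOfDetNeZero _ hne).surjective
    have hst : HasStrictFDerivAt f A z := hfz.hasStrictFDerivAt
    have hmap : Filter.map f (𝓝 z) = 𝓝 (f z) :=
      hst.map_nhds_eq_of_surj (LinearMap.range_eq_top.2 hsurj)
    have himg : f '' U ∈ 𝓝 (f z) := by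
      rw [← hmap]
      exact Filter.image_mem_map (hU.mem_nhds hz)
    have hev : (fun x => MvPolynomial.eval x P) =ᶠ[𝓝 (f z)] 0 := by
      filter_upwards [himg] with x hx
      obtain ⟨w, hw, rfl⟩ := hx
      exact hdep w hw
    have hzero := (analyticOnNhd_mvPolynomial_eval P).eqOn_zero_of_preconnected_of_eventuallyEq_zero
      isPreconnected_univ (mem_univ (f z)) hev
    have : P = 0 := by
      apply MvPolynomial.funext
      intro x
      simpa using hzero (mem_univ x)
    exact hP this
  refine ⟨?_, hdet⟩
  -- linear dependence of the differentials
  set M : Matrix (Fin n) (Fin n) ℂ := LinearMap.toMatrix' (A : (Fin n → ℂ) →ₗ[ℂ] (Fin n → ℂ))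
    with hMdef
  have hMdet : M.det = 0 := by
    rw [hMdef, LinearMap.det_toMatrix']; exact hdet
  obtain ⟨v, hv0, hvM⟩ := Matrix.exists_vecMul_eq_zero_iff.2 hMdet
  rw [Fintype.not_linearIndependent_iff]
  refine ⟨v, ?_, ?_⟩
  · apply ContinuousLinearMap.ext
    intro w
    have hAw : A w = M.mulVec w := by
      rw [hMdef, ← Matrix.toLin'_apply, Matrix.toLin'_toMatrix']; rfl
    have : ∑ i, v i * L i w = 0 := by
      calc ∑ i, v i * L i w = ∑ i, v i * A w i := by simp [hAi]
        _ = dotProduct v (M.mulVec w) := by rw [hAw]; rfl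
        _ = dotProduct (Matrix.vecMul v M) w := Matrix.dotProduct_mulVec v M w
        _ = 0 := by rw [hvM]; simp
    simpa [ContinuousLinearMap.sum_apply] using this
  · obtain ⟨i, hi⟩ := Function.ne_iff.1 hv0
    exact ⟨i, hi⟩
end

section
/- Let M be a Hausdorff, second-countable complex manifold modeled on ℂⁿ. For every compact set K ⊆ M, the meromorphic hull Ĥ_M(K) is a closed subset of M. -/
open Set Manifold

/-- A meromorphic function on a complex manifold `M` modeled on `ℂⁿ`, given by an open
cover of `M` together with local holomorphic numerators and denominators, the
denominators vanishing identically on no nonempty open subset, and compatible on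
overlaps. -/
structure MeroFunM (n : ℕ) (M : Type*) [TopologicalSpace M]
    [ChartedSpace (Fin n → ℂ) M] where
  ι : Type
  U : ι → Set M
  isOpen_U : ∀ i, IsOpen (U i)
  covers : ∀ x : M, ∃ i, x ∈ U i
  num : ι → M → ℂ
  den : ι → M → ℂ
  num_holo : ∀ i, MDifferentiableOn 𝓘(ℂ, Fin n → ℂ) 𝓘(ℂ, ℂ) (num i) (U i)
  den_holo : ∀ i, MDifferentiableOn 𝓘(ℂ, Fin n → ℂ) 𝓘(ℂ, ℂ) (den i) (U i)
  den_ne : ∀ i, ∀ W : Set M, IsOpen W → W.Nonempty → W ⊆ U i → ∃ z ∈ W, den i z ≠ 0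
  compat : ∀ i j, ∀ z ∈ U i ∩ U j, num i z * den j z = num j z * den i z

/-- `f` is holomorphic at `p` with value `c`: near `p`, `num/den` agrees with a quotient
`w/t` of holomorphic functions with `t(p) ≠ 0`, and `c = w(p)/t(p)`. -/
def MeroFunM.IsHolomorphicAt {n : ℕ} {M : Type*} [TopologicalSpace M]
    [ChartedSpace (Fin n → ℂ) M] (f : MeroFunM n M) (p : M) (c : ℂ) : Prop :=
  ∃ i, p ∈ f.U i ∧ ∃ W : Set M, IsOpen W ∧ p ∈ W ∧ W ⊆ f.U i ∧
    ∃ w t : M → ℂ, MDifferentiableOn 𝓘(ℂ, Fin n → ℂ) 𝓘(ℂ, ℂ) w W ∧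
      MDifferentiableOn 𝓘(ℂ, Fin n → ℂ) 𝓘(ℂ, ℂ) t W ∧ t p ≠ 0 ∧
      (∀ z ∈ W, f.num i z * t z = w z * f.den i z) ∧ c = w p / t p

/-- The meromorphic hull `Ĥ_M(K)` of a compact `K ⊆ M`: points `z` such that every
meromorphic function on `M` holomorphic on `K ∪ {z}` satisfies
`‖f(z)‖ ≤ sup_{w ∈ K} ‖f(w)‖`. -/
def merHullM {n : ℕ} {M : Type*} [TopologicalSpace M]
    [ChartedSpace (Fin n → ℂ) M] (K : Set M) : Set M :=
  {z : M | ∀ f : MeroFunM n M, ∀ c : ℂ, f.IsHolomorphicAt z c →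
    ∀ φ : M → ℂ, (∀ w ∈ K, f.IsHolomorphicAt w (φ w)) →
      ‖c‖ ≤ sSup ((fun w => ‖φ w‖) '' K)}

/-- On a Hausdorff, second-countable complex manifold modeled on `ℂⁿ`, the meromorphic
hull of every compact set is closed. -/
theorem isClosed_merHullM {n : ℕ} (M : Type*) [TopologicalSpace M]
    [T2Space M] [SecondCountableTopology M] [ChartedSpace (Fin n → ℂ) M]
    [IsManifold 𝓘(ℂ, Fin n → ℂ) (⊤ : WithTop ℕ∞) M]
    (K : Set M) (hK : IsCompact K) :
    IsClosed (merHullM (n := n) K) := by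
  rw [← isOpen_compl_iff, isOpen_iff_forall_mem_open]
  intro z hz
  simp only [mem_compl_iff, merHullM, mem_setOf_eq, not_forall, not_le] at hz
  obtain ⟨f, c, hc, φ, hφ, hS⟩ := hz
  obtain ⟨i, hzU, W, hWo, hzW, hWU, w, t, hw, ht, htz, heq, hcv⟩ := hc
  set S := sSup ((fun w => ‖φ w‖) '' K) with hSdef
  -- W' : points of W where t ≠ 0
  have hW'o : IsOpen (W ∩ t ⁻¹' ({0}ᶜ)) :=
    ht.continuousOn.isOpen_inter_preimage hWo isOpen_compl_singleton
  set W' := W ∩ t ⁻¹' ({0}ᶜ) with hW'def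
  have hcont : ContinuousOn (fun q => ‖w q / t q‖) W' := by
    apply ContinuousOn.norm
    exact ((hw.continuousOn.mono inter_subset_left).div
      (ht.continuousOn.mono inter_subset_left)) (fun q hq => hq.2)
  have hVo : IsOpen (W' ∩ (fun q => ‖w q / t q‖) ⁻¹' (Set.Ioi S)) :=
    hcont.isOpen_inter_preimage hW'o isOpen_Ioi
  refine ⟨W' ∩ (fun q => ‖w q / t q‖) ⁻¹' (Set.Ioi S), ?_, hVo, ?_⟩
  · intro q hq hqmem
    have hholo : f.IsHolomorphicAt q (w q / t q) :=
      ⟨i, hWU hq.1.1, W, hWo, hq.1.1, hWU, w, t, hw, ht, hq.1.2, heq, rfl⟩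
    have := hqmem f (w q / t q) hholo φ hφ
    exact absurd this (not_le.mpr hq.2)
  · exact mem_inter (mem_inter hzW htz)
      (by rw [mem_preimage, mem_Ioi, ← hcv]; exact hS)
end

section
/- Let n ≥ 1, let K ⊆ ℂⁿ be a nonempty compact set that is rationally convex, i.e. R(K) = K, and let U ⊆ ℂⁿ be an open set with K ⊆ U. Then there exist N ≥ 1 and polynomials p₁, …, p_N, q₁, …, q_N ∈ ℂ[z₁,…,zₙ] with each q_j nonvanishing on K, such that the open set Π := {z ∈ ℂⁿ : ‖p_j(z)‖ < ‖q_j(z)‖ for all j = 1, …, N} satisfies K ⊆ Π and the closure of Π is a compact subset of U. -/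
open Set

lemma sep_lemma {n : ℕ} (K : Set (Fin n → ℂ)) (hK : IsCompact K) (hKne : K.Nonempty)
    (z : Fin n → ℂ) (hz : z ∉ ratHull K) :
    ∃ P Q : MvPolynomial (Fin n) ℂ,
      (∀ w ∈ K, ‖MvPolynomial.eval w P‖ < ‖MvPolynomial.eval w Q‖) ∧
      ‖MvPolynomial.eval z Q‖ < ‖MvPolynomial.eval z P‖ := by
  simp only [ratHull, mem_setOf_eq, not_forall, not_le] at hz
  obtain ⟨p, q, hq, hlt⟩ := hz
  set f : (Fin n → ℂ) → ℝ := fun w => ‖MvPolynomial.eval w p / MvPolynomial.eval w q‖ with hf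
  have hfc : ContinuousOn f K := by
    apply ContinuousOn.norm
    exact ContinuousOn.div (MvPolynomial.continuous_eval _).continuousOn
      (MvPolynomial.continuous_eval _).continuousOn
      (fun x hx => hq x (Or.inl hx))
  have hbdd : BddAbove (f '' K) := (hK.image_of_continuousOn hfc).bddAbove
  set s := sSup (f '' K) with hs
  have hle : ∀ w ∈ K, f w ≤ s := fun w hw => le_csSup hbdd ⟨w, hw, rfl⟩
  have hs0 : 0 ≤ s := by
    obtain ⟨w₀, hw₀⟩ := hKne
    exact le_trans (norm_nonneg _) (hle w₀ hw₀)
  set t : ℝ := (s + f z) / 2 with ht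
  have hst : s < t := by simp only [ht]; linarith [hlt]
  have htz : t < f z := by simp only [ht]; linarith [hlt]
  have ht0 : 0 < t := lt_of_le_of_lt hs0 hst
  refine ⟨p, MvPolynomial.C (t : ℂ) * q, ?_, ?_⟩
  · intro w hw
    have hqw : MvPolynomial.eval w q ≠ 0 := hq w (Or.inl hw)
    have h1 : ‖MvPolynomial.eval w p‖ = f w * ‖MvPolynomial.eval w q‖ := by
      rw [hf]; simp only [norm_div]
      rw [div_mul_cancel₀]
      exact norm_ne_zero_iff.mpr hqw
    rw [h1]
    simp only [map_mul, MvPolynomial.eval_C, norm_mul, Complex.norm_real]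
    rw [Real.norm_of_nonneg ht0.le]
    exact mul_lt_mul_of_pos_right (lt_of_le_of_lt (hle w hw) hst)
      (norm_pos_iff.mpr hqw)
  · have hqz : MvPolynomial.eval z q ≠ 0 := hq z (Or.inr rfl)
    have h1 : ‖MvPolynomial.eval z p‖ = f z * ‖MvPolynomial.eval z q‖ := by
      rw [hf]; simp only [norm_div]
      rw [div_mul_cancel₀]
      exact norm_ne_zero_iff.mpr hqz
    rw [h1]
    simp only [map_mul, MvPolynomial.eval_C, norm_mul, Complex.norm_real]
    rw [Real.norm_of_nonneg ht0.le]
    exact mul_lt_mul_of_pos_right htz (norm_pos_iff.mpr hqz)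


/-- Every rationally convex nonempty compact `K ⊆ ℂⁿ` admits a rational polyhedron
neighborhood basis: for every open `U ⊇ K` there are finitely many polynomials
`p₁, …, p_N, q₁, …, q_N`, with each `q_j` nonvanishing on `K`, such that
`Π := {z : ‖p_j(z)‖ < ‖q_j(z)‖ for all j}` contains `K` and has compact closure
contained in `U`. -/
theorem rationally_convex_polyhedron_neighborhood {n : ℕ} (hn : 1 ≤ n)
    (K : Set (Fin n → ℂ)) (hK : IsCompact K) (hKne : K.Nonempty)
    (hKrc : ratHull K = K)
    (U : Set (Fin n → ℂ)) (hU : IsOpen U) (hKU : K ⊆ U) :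
    ∃ N : ℕ, 1 ≤ N ∧ ∃ p q : Fin N → MvPolynomial (Fin n) ℂ,
      (∀ j, ∀ x ∈ K, MvPolynomial.eval x (q j) ≠ 0) ∧
      K ⊆ {z | ∀ j, ‖MvPolynomial.eval z (p j)‖ < ‖MvPolynomial.eval z (q j)‖} ∧
      IsCompact (closure {z | ∀ j, ‖MvPolynomial.eval z (p j)‖ < ‖MvPolynomial.eval z (q j)‖}) ∧
      closure {z | ∀ j, ‖MvPolynomial.eval z (p j)‖ < ‖MvPolynomial.eval z (q j)‖} ⊆ U := by
  -- bound for K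
  obtain ⟨r, hr⟩ := hK.isBounded.subset_closedBall 0
  have hr0 : 0 ≤ r := by
    obtain ⟨w₀, hw₀⟩ := hKne
    have := hr hw₀
    simpa [Metric.mem_closedBall] using (dist_nonneg.trans this)
  -- the compact exterior set
  set C : Set (Fin n → ℂ) := Metric.closedBall 0 (r + 2) \ U with hCdef
  have hCc : IsCompact C := (isCompact_closedBall _ _).diff hU
  -- separating pairs for every point of C
  have hsep : ∀ z : C, ∃ P Q : MvPolynomial (Fin n) ℂ,
      (∀ w ∈ K, ‖MvPolynomial.eval w P‖ < ‖MvPolynomial.eval w Q‖) ∧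
      ‖MvPolynomial.eval (z : Fin n → ℂ) Q‖ < ‖MvPolynomial.eval (z : Fin n → ℂ) P‖ := by
    intro z
    apply sep_lemma K hK hKne
    rw [hKrc]
    intro hzK
    exact z.2.2 (hKU hzK)
  choose P Q hPQ hPQz using hsep
  -- open cover of C
  have hcover : C ⊆ ⋃ z : C, {w | ‖MvPolynomial.eval w (Q z)‖ < ‖MvPolynomial.eval w (P z)‖} :=
    fun x hx => mem_iUnion.mpr ⟨⟨x, hx⟩, hPQz ⟨x, hx⟩⟩
  obtain ⟨T, hT⟩ := hCc.elim_finite_subcover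
    (fun z : C => {w | ‖MvPolynomial.eval w (Q z)‖ < ‖MvPolynomial.eval w (P z)‖})
    (fun z => isOpen_lt ((MvPolynomial.continuous_eval _).norm)
      ((MvPolynomial.continuous_eval _).norm)) hcover
  set m := T.card with hm
  set e := T.equivFin with he
  -- combined families over Fin n ⊕ Fin m
  set PP : Fin n ⊕ Fin m → MvPolynomial (Fin n) ℂ :=
    Sum.elim (fun j => MvPolynomial.X j) (fun i => P ((e.symm i : T) : C)) with hPP
  set QQ : Fin n ⊕ Fin m → MvPolynomial (Fin n) ℂ :=
    Sum.elim (fun _ => MvPolynomial.C ((r + 1 : ℝ) : ℂ)) (fun i => Q ((e.symm i : T) : C)) with hQQ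
  set N := n + m with hN
  refine ⟨N, le_trans hn (Nat.le_add_right n m),
    fun j => PP (finSumFinEquiv.symm j), fun j => QQ (finSumFinEquiv.symm j), ?_, ?_, ?_, ?_⟩
  -- common facts
  · -- q nonvanishing on K
    intro j x hx
    rcases h : finSumFinEquiv.symm j with j' | i
    · simp only [hQQ, h, Sum.elim_inl, MvPolynomial.eval_C]
      intro hc
      have : (r + 1 : ℝ) = 0 := by exact_mod_cast hc
      linarith
    · simp only [hQQ, h, Sum.elim_inr]
      intro hc
      have := hPQ ((e.symm i : T) : C) x hx
      rw [hc] at this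
      simp only [norm_zero] at this
      exact absurd this (not_lt.mpr (norm_nonneg _))
  · -- K ⊆ Π
    intro w hw j
    rcases h : finSumFinEquiv.symm j with j' | i
    · simp only [hPP, hQQ, h, Sum.elim_inl, MvPolynomial.eval_C, MvPolynomial.eval_X]
      have h1 : ‖w j'‖ ≤ ‖w‖ := norm_le_pi_norm w j'
      have h2 : ‖w‖ ≤ r := by
        have := hr hw
        rwa [Metric.mem_closedBall, dist_zero_right] at this
      have h3 : ‖((r + 1 : ℝ) : ℂ)‖ = r + 1 := by
        rw [Complex.norm_real, Real.norm_of_nonneg (by linarith)]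
      rw [h3]
      linarith
    · simp only [hPP, hQQ, h, Sum.elim_inr]
      exact hPQ ((e.symm i : T) : C) w hw
  · -- compact closure
    apply (isCompact_closedBall (0 : Fin n → ℂ) (r + 1)).of_isClosed_subset isClosed_closure
    apply closure_minimal _ Metric.isClosed_closedBall
    intro w hw
    rw [Metric.mem_closedBall, dist_zero_right]
    rw [pi_norm_le_iff_of_nonneg (by linarith : (0:ℝ) ≤ r + 1)]
    intro j'
    have := hw (finSumFinEquiv (Sum.inl j'))
    simp only [Equiv.symm_apply_apply, hPP, hQQ, Sum.elim_inl, MvPolynomial.eval_C,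
      MvPolynomial.eval_X] at this
    have h3 : ‖((r + 1 : ℝ) : ℂ)‖ = r + 1 := by
      rw [Complex.norm_real, Real.norm_of_nonneg (by linarith)]
    rw [h3] at this
    exact this.le
  · -- closure ⊆ U
    intro w hw
    by_contra hwU
    have hwball : w ∈ Metric.closedBall (0 : Fin n → ℂ) (r + 2) := by
      have hsub : closure {z | ∀ j, ‖MvPolynomial.eval z (PP (finSumFinEquiv.symm j))‖ <
          ‖MvPolynomial.eval z (QQ (finSumFinEquiv.symm j))‖} ⊆
          Metric.closedBall (0 : Fin n → ℂ) (r + 1) := by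
        apply closure_minimal _ Metric.isClosed_closedBall
        intro v hv
        rw [Metric.mem_closedBall, dist_zero_right]
        rw [pi_norm_le_iff_of_nonneg (by linarith : (0:ℝ) ≤ r + 1)]
        intro j'
        have := hv (finSumFinEquiv (Sum.inl j'))
        simp only [Equiv.symm_apply_apply, hPP, hQQ, Sum.elim_inl, MvPolynomial.eval_C,
          MvPolynomial.eval_X] at this
        have h3 : ‖((r + 1 : ℝ) : ℂ)‖ = r + 1 := by
          rw [Complex.norm_real, Real.norm_of_nonneg (by linarith)]
        rw [h3] at this
        exact this.le
      have := hsub hw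
      rw [Metric.mem_closedBall] at this ⊢
      linarith
    have hwC : w ∈ C := ⟨hwball, hwU⟩
    obtain ⟨z, hzT, hzw⟩ := mem_iUnion₂.mp (hT hwC)
    -- contradiction with closure Π ⊆ {‖P z‖ ≤ ‖Q z‖}
    set i : Fin m := e ⟨z, hzT⟩ with hi
    have hei : ((e.symm i : T) : C) = z := by rw [hi, Equiv.symm_apply_apply]
    have hclosed : closure {v | ∀ j, ‖MvPolynomial.eval v (PP (finSumFinEquiv.symm j))‖ <
        ‖MvPolynomial.eval v (QQ (finSumFinEquiv.symm j))‖} ⊆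
        {v | ‖MvPolynomial.eval v (P z)‖ ≤ ‖MvPolynomial.eval v (Q z)‖} := by
      apply closure_minimal _ (isClosed_le ((MvPolynomial.continuous_eval _).norm)
        ((MvPolynomial.continuous_eval _).norm))
      intro v hv
      have := hv (finSumFinEquiv (Sum.inr i))
      simp only [Equiv.symm_apply_apply, hPP, hQQ, Sum.elim_inr, hei] at this
      exact this.le
    exact absurd (mem_setOf_eq ▸ hzw) (not_lt.mpr (hclosed hw))
end
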